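/- arXiv:0804.2120 — 6 statements merged into one kernel-verified Lean document; each statement's English description precedes it below -/
import Mathlib

section
/- There exist complex numbers V_{nα} (defined for integers 1 ≤ n ≤ α) satisfying the recurrence relations α(α−n)·V_{nα} + Σ_{s=n}^{α−1} q_{α−s}·V_{ns} = 0 for all 1 ≤ n < α, and α·Σ_{n=1}^{α} V_{nα} + q_α = 0 for all α ≥ 1, and such that the series Σ_{n=1}^∞ (1/n)·Σ_{α=n}^∞ α·|V_{nα}| converges. -/
open Complex MeasureTheory Filter Topology

noncomputable def qfun (q : ℕ → ℂ) (x : ℝ) : ℂ :=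
  ∑' n : ℕ, q (n + 1) * Complex.exp (Complex.I * ((n : ℂ) + 1) * (x : ℂ))

noncomputable def f1 (V : ℕ → ℕ → ℂ) (lam : ℂ) (x : ℂ) : ℂ :=
  Complex.exp (Complex.I * lam * x) *
    (1 + ∑' n : ℕ, (((n : ℂ) + 1) + 2 * lam)⁻¹ *
      ∑' k : ℕ, V (n + 1) (n + 1 + k) *
        Complex.exp (Complex.I * ((n : ℂ) + 1 + (k : ℂ)) * x))

noncomputable def f2 (V : ℕ → ℕ → ℂ) (β : ℝ) (lam : ℂ) (x : ℂ) : ℂ :=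
  Complex.exp (-Complex.I * lam * (β : ℂ) * x) *
    (1 + ∑' n : ℕ, (((n : ℂ) + 1) - 2 * lam * (β : ℂ))⁻¹ *
      ∑' k : ℕ, V (n + 1) (n + 1 + k) *
        Complex.exp (Complex.I * ((n : ℂ) + 1 + (k : ℂ)) * x))

noncomputable def C12 (V : ℕ → ℕ → ℂ) (β : ℝ) (lam : ℂ) : ℂ :=
  (f1 V lam 0 * deriv (fun t : ℝ => f2 V β lam (t : ℂ)) 0
    - deriv (fun t : ℝ => f1 V lam (t : ℂ)) 0 * f2 V β lam 0) / (2 * Complex.I * lam)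

noncomputable def rho (β : ℝ) (x : ℝ) : ℝ := if 0 ≤ x then 1 else β ^ 2

/-- The recurrence relations (6)–(7) linking the coefficients `V` to the Fourier
coefficients `q` of the potential. -/
def Recur (q : ℕ → ℂ) (V : ℕ → ℕ → ℂ) : Prop :=
  (∀ n α : ℕ, 1 ≤ n → n < α →
      (α : ℂ) * ((α : ℂ) - (n : ℂ)) * V n α
        + ∑ s ∈ Finset.Icc n (α - 1), q (α - s) * V n s = 0) ∧
  (∀ α : ℕ, 1 ≤ α → (α : ℂ) * ∑ n ∈ Finset.Icc 1 α, V n α + q α = 0)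

/-- Convergence of the series `∑_{n≥1} (1/n) ∑_{α≥n} α |V_{nα}|` (inner sums indexed
by `α = n + k`). -/
def Conv (V : ℕ → ℕ → ℂ) : Prop :=
  (∀ n : ℕ, 1 ≤ n → Summable fun k : ℕ => ((n + k : ℕ) : ℝ) * ‖V n (n + k)‖) ∧
  Summable (fun n : ℕ =>
    ((n : ℝ) + 1)⁻¹ * ∑' k : ℕ, ((n + 1 + k : ℕ) : ℝ) * ‖V (n + 1) (n + 1 + k)‖)



noncomputable def Vm (q : ℕ → ℂ) : ℕ → ℕ → ℂ
  | α, n =>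
    if h1 : 1 ≤ n ∧ n < α then
      -((α : ℂ) * ((α : ℂ) - (n : ℂ)))⁻¹ *
        ∑ s ∈ (Finset.Icc n (α - 1)).attach,
          q (α - s.1) * Vm q s.1 n
    else if h2 : n = α ∧ 1 ≤ α then
      -q α / (α : ℂ) - ∑ m ∈ (Finset.Icc 1 (α - 1)).attach,
        (-((α : ℂ) * ((α : ℂ) - (m.1 : ℂ)))⁻¹ *
          ∑ s ∈ (Finset.Icc m.1 (α - 1)).attach,
            q (α - s.1) * Vm q s.1 m.1)
    else 0
  termination_by α n => α
  decreasing_by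
  · have := Finset.mem_Icc.mp s.2; omega
  · have := Finset.mem_Icc.mp s.2; omega

lemma Vm_zero (q : ℕ → ℂ) {n α : ℕ} (h : n = 0 ∨ α < n) : Vm q α n = 0 := by
  rw [Vm]
  rw [dif_neg (by omega), dif_neg (by omega)]

lemma Vm_off (q : ℕ → ℂ) {n α : ℕ} (hn : 1 ≤ n) (hna : n < α) :
    Vm q α n = -((α : ℂ) * ((α : ℂ) - (n : ℂ)))⁻¹ *
      ∑ s ∈ Finset.Icc n (α - 1), q (α - s) * Vm q s n := by
  rw [Vm, dif_pos ⟨hn, hna⟩, ← Finset.sum_attach (Finset.Icc n (α-1)) (fun s => q (α - s) * Vm q s n)]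

lemma Vm_diag (q : ℕ → ℂ) {α : ℕ} (hα : 1 ≤ α) :
    Vm q α α = -q α / (α : ℂ) - ∑ m ∈ Finset.Icc 1 (α - 1), Vm q α m := by
  rw [Vm, dif_neg (by omega), dif_pos ⟨rfl, hα⟩]
  congr 1
  rw [← Finset.sum_attach (Finset.Icc 1 (α-1)) (fun m => Vm q α m)]
  refine Finset.sum_congr rfl fun m _ => ?_
  have hm := Finset.mem_Icc.mp m.2
  rw [Vm_off q hm.1 (by omega)]
  rw [← Finset.sum_attach (Finset.Icc m.1 (α-1)) (fun s => q (α - s) * Vm q s m.1)]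

lemma recur1 (q : ℕ → ℂ) (n α : ℕ) (hn : 1 ≤ n) (hna : n < α) :
    (α : ℂ) * ((α : ℂ) - (n : ℂ)) * Vm q α n
      + ∑ s ∈ Finset.Icc n (α - 1), q (α - s) * Vm q s n = 0 := by
  have hc : (α : ℂ) * ((α : ℂ) - (n : ℂ)) ≠ 0 := by
    apply mul_ne_zero
    · exact_mod_cast Nat.cast_ne_zero.mpr (by omega)
    · exact sub_ne_zero.mpr (by exact_mod_cast Nat.cast_injective.ne (by omega : α ≠ n))
  rw [Vm_off q hn hna]
  have := mul_inv_cancel₀ hc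
  linear_combination (-(∑ s ∈ Finset.Icc n (α - 1), q (α - s) * Vm q s n)) * this

lemma recur2 (q : ℕ → ℂ) (α : ℕ) (hα : 1 ≤ α) :
    (α : ℂ) * ∑ n ∈ Finset.Icc 1 α, Vm q α n + q α = 0 := by
  obtain ⟨β, rfl⟩ : ∃ β, α = β + 1 := ⟨α - 1, by omega⟩
  rw [Finset.sum_Icc_succ_top (by omega : 1 ≤ β + 1)]
  rw [Vm_diag q hα]
  have h1 : (β + 1 : ℕ) - 1 = β := by omega
  rw [h1]
  have hc : ((β + 1 : ℕ) : ℂ) ≠ 0 := Nat.cast_ne_zero.mpr (by omega)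
  have key : ∀ S c qq : ℂ, c ≠ 0 → c * (S + (-qq / c - S)) + qq = 0 := by
    intros S c qq hcc; field_simp; ring
  exact key _ _ _ hc

noncomputable def A2 (q : ℕ → ℂ) : ℝ := ∑' k : ℕ, ‖q (k + 1)‖ ^ 2

lemma A2_nonneg (q : ℕ → ℂ) : 0 ≤ A2 q := tsum_nonneg (fun k => by positivity)

lemma sq_sum_le (q : ℕ → ℂ) (hq : Summable fun n : ℕ => ‖q (n + 1)‖ ^ 2)
    (s' : ℕ) (F : Finset ℕ) (hF : ∀ j ∈ F, s' < j) :
    ∑ j ∈ F, ‖q (j - s')‖ ^ 2 ≤ A2 q := by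
  have h1 : ∑ j ∈ F, ‖q (j - s')‖ ^ 2
      = ∑ k ∈ F.image (fun j => j - s' - 1), ‖q (k + 1)‖ ^ 2 := by
    rw [Finset.sum_image (fun x hx y hy h => by
      have := hF x hx; have := hF y hy; omega)]
    refine Finset.sum_congr rfl fun j hj => ?_
    have h : j - s' - 1 + 1 = j - s' := by have := hF j hj; omega
    rw [h]
  rw [h1]
  exact Summable.sum_le_tsum _ (fun k _ => by positivity) hq

lemma inner_cs (q : ℕ → ℂ) (hq : Summable fun n : ℕ => ‖q (n + 1)‖ ^ 2)
    (s' : ℕ) (F : Finset ℕ) (g : ℕ → ℝ) (hF : ∀ j ∈ F, s' < j)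
    (c : ℝ) (hc : ∑ j ∈ F, g j ^ 2 ≤ c) :
    ∑ j ∈ F, g j * ‖q (j - s')‖ ≤ Real.sqrt c * Real.sqrt (A2 q) := by
  refine (Real.sum_mul_le_sqrt_mul_sqrt F g (fun j => ‖q (j - s')‖)).trans ?_
  have h1 : Real.sqrt (∑ j ∈ F, g j ^ 2) ≤ Real.sqrt c := Real.sqrt_le_sqrt hc
  have h2 : Real.sqrt (∑ j ∈ F, ‖q (j - s')‖ ^ 2) ≤ Real.sqrt (A2 q) :=
    Real.sqrt_le_sqrt (sq_sum_le q hq s' F hF)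
  exact mul_le_mul h1 h2 (Real.sqrt_nonneg _) (Real.sqrt_nonneg _)

lemma basel_tail (N : ℕ) (hN : 1 ≤ N) :
    ∀ M : ℕ, ∑ j ∈ Finset.Icc (N + 1) M, ((j : ℝ)⁻¹) ^ 2 ≤ (N : ℝ)⁻¹ := by
  have key : ∀ M : ℕ, N ≤ M →
      ∑ j ∈ Finset.Icc (N + 1) M, ((j : ℝ)⁻¹) ^ 2 ≤ (N : ℝ)⁻¹ - (M : ℝ)⁻¹ := by
    intro M hM
    induction M, hM using Nat.le_induction with
    | base => rw [Finset.Icc_eq_empty (by omega)]; simp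
    | succ M hM ih =>
      rw [Finset.sum_Icc_succ_top (by omega : N + 1 ≤ M + 1)]
      have hM1 : (1 : ℝ) ≤ (M : ℝ) := by exact_mod_cast hN.trans hM
      have hMpos : (0 : ℝ) < (M : ℝ) := by linarith
      have harith : ((((M + 1 : ℕ)) : ℝ)⁻¹) ^ 2 ≤ (M : ℝ)⁻¹ - (((M + 1 : ℕ)) : ℝ)⁻¹ := by
        push_cast
        have e1 : (M : ℝ)⁻¹ - ((M : ℝ) + 1)⁻¹ = ((M : ℝ) * ((M : ℝ) + 1))⁻¹ := by
          field_simp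
          ring
        rw [e1, sq, ← mul_inv]
        gcongr <;> first | positivity | linarith
      linarith
  intro M
  rcases le_or_gt N M with h | h
  · refine (key M h).trans ?_
    have : (0:ℝ) ≤ (M : ℝ)⁻¹ := by positivity
    linarith
  · rw [Finset.Icc_eq_empty (by omega)]
    simp

lemma basel2 : ∀ M : ℕ, ∑ j ∈ Finset.Icc 1 M, ((j : ℝ)⁻¹) ^ 2 ≤ 2 := by
  intro M
  rcases Nat.eq_zero_or_pos M with h | h
  · subst h; simp
  · have hins : Finset.Icc 1 M = insert 1 (Finset.Icc 2 M) := by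
      ext x; simp only [Finset.mem_Icc, Finset.mem_insert]; omega
    rw [hins, Finset.sum_insert (by simp [Finset.mem_Icc])]
    have h2 := basel_tail 1 le_rfl M
    norm_num at h2 ⊢
    linarith

lemma L1 (q : ℕ → ℂ) {n α : ℕ} (hn : 1 ≤ n) (hna : n < α) :
    (α : ℝ) * ((α : ℝ) - (n : ℝ)) * ‖Vm q α n‖
      ≤ ∑ s ∈ Finset.Icc n (α - 1), ‖q (α - s)‖ * ‖Vm q s n‖ := by
  have hnr : (n : ℝ) < (α : ℝ) := by exact_mod_cast hna
  have hα : (0 : ℝ) < (α : ℝ) := by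
    have : (0:ℕ) < α := by omega
    exact_mod_cast this
  have hc : (0 : ℝ) < (α : ℝ) * ((α : ℝ) - (n : ℝ)) := by nlinarith
  have hnorm : ‖(α : ℂ) * ((α : ℂ) - (n : ℂ))‖ = (α : ℝ) * ((α : ℝ) - (n : ℝ)) := by
    rw [norm_mul, Complex.norm_natCast]
    congr 1
    have h : (α : ℂ) - (n : ℂ) = ((α - n : ℕ) : ℂ) := by
      push_cast [Nat.cast_sub hna.le]; ring
    rw [h, Complex.norm_natCast]
    push_cast [Nat.cast_sub hna.le]; ring
  have hval : ‖Vm q α n‖ = ((α : ℝ) * ((α : ℝ) - (n : ℝ)))⁻¹ *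
      ‖∑ s ∈ Finset.Icc n (α - 1), q (α - s) * Vm q s n‖ := by
    rw [Vm_off q hn hna, norm_mul, norm_neg, norm_inv, hnorm]
  rw [hval, ← mul_assoc, mul_inv_cancel₀ (ne_of_gt hc), one_mul]
  refine (norm_sum_le _ _).trans ?_
  refine le_of_eq (Finset.sum_congr rfl fun s _ => ?_)
  rw [norm_mul]

lemma L2 (q : ℕ → ℂ) {α : ℕ} (hα : 1 ≤ α) :
    ‖Vm q α α‖ ≤ ‖q α‖ / (α : ℝ) + ∑ m ∈ Finset.Icc 1 (α - 1), ‖Vm q α m‖ := by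
  rw [Vm_diag q hα]
  refine (norm_sub_le _ _).trans ?_
  refine add_le_add (le_of_eq ?_) (norm_sum_le _ _)
  rw [norm_div, norm_neg, Complex.norm_natCast]

lemma swap_tri (b : ℕ) (f : ℕ → ℕ → ℝ) :
    ∑ m ∈ Finset.Icc 1 b, ∑ s ∈ Finset.Icc m b, f m s
      = ∑ s ∈ Finset.Icc 1 b, ∑ m ∈ Finset.Icc 1 s, f m s := by
  have h1 : ∀ m ∈ Finset.Icc 1 b, ∑ s ∈ Finset.Icc m b, f m s
      = ∑ s ∈ Finset.Icc 1 b, if m ≤ s then f m s else 0 := by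
    intro m hm
    rw [← Finset.sum_filter]
    congr 1
    ext x
    simp only [Finset.mem_Icc, Finset.mem_filter]
    have := Finset.mem_Icc.mp hm
    omega
  rw [Finset.sum_congr rfl h1, Finset.sum_comm]
  refine Finset.sum_congr rfl fun s hs => ?_
  rw [← Finset.sum_filter]
  congr 1
  ext x
  simp only [Finset.mem_Icc, Finset.mem_filter]
  have := Finset.mem_Icc.mp hs
  omega

noncomputable def Tc (q : ℕ → ℂ) (α : ℕ) : ℝ := ∑ m ∈ Finset.Icc 1 α, ‖Vm q α m‖

lemma Tc_nonneg (q : ℕ → ℂ) (α : ℕ) : 0 ≤ Tc q α :=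
  Finset.sum_nonneg fun _ _ => norm_nonneg _

lemma L3 (q : ℕ → ℂ) {α : ℕ} (hα : 1 ≤ α) :
    (α : ℝ) * Tc q α
      ≤ ‖q α‖ + 2 * ∑ s ∈ Finset.Icc 1 (α - 1), ‖q (α - s)‖ * Tc q s := by
  have hαpos : (0:ℝ) < (α : ℝ) := by exact_mod_cast (by omega : 0 < α)
  have key : ∀ m ∈ Finset.Icc 1 (α - 1), (α : ℝ) * ‖Vm q α m‖
      ≤ ∑ s ∈ Finset.Icc m (α - 1), ‖q (α - s)‖ * ‖Vm q s m‖ := by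
    intro m hm
    obtain ⟨hm1, hm2⟩ := Finset.mem_Icc.mp hm
    have hma : m < α := by omega
    refine le_trans ?_ (L1 q hm1 hma)
    have h1 : (1:ℝ) ≤ (α:ℝ) - (m:ℝ) := by
      have : (m:ℝ) + 1 ≤ (α:ℝ) := by exact_mod_cast hma
      linarith
    nlinarith [mul_nonneg (mul_nonneg hαpos.le (norm_nonneg (Vm q α m)))
      (by linarith : (0:ℝ) ≤ (α:ℝ) - (m:ℝ) - 1)]
  have off : (α : ℝ) * ∑ m ∈ Finset.Icc 1 (α-1), ‖Vm q α m‖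
      ≤ ∑ s ∈ Finset.Icc 1 (α-1), ‖q (α - s)‖ * Tc q s := by
    rw [Finset.mul_sum]
    refine le_trans (Finset.sum_le_sum key) ?_
    rw [swap_tri (α-1) (fun m s => ‖q (α - s)‖ * ‖Vm q s m‖)]
    refine le_of_eq (Finset.sum_congr rfl fun s hs => ?_)
    rw [Tc, Finset.mul_sum]
  have hd := L2 q hα
  have diag : (α:ℝ) * ‖Vm q α α‖
      ≤ ‖q α‖ + (α:ℝ) * ∑ m ∈ Finset.Icc 1 (α-1), ‖Vm q α m‖ := by
    have h2 := mul_le_mul_of_nonneg_left hd (le_of_lt hαpos)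
    rw [mul_add, mul_div_cancel₀ _ (ne_of_gt hαpos)] at h2
    linarith
  have hsplit : Tc q α = ‖Vm q α α‖ + ∑ m ∈ Finset.Icc 1 (α-1), ‖Vm q α m‖ := by
    simp only [Tc]
    obtain ⟨β, rfl⟩ : ∃ β, α = β + 1 := ⟨α - 1, by omega⟩
    rw [Finset.sum_Icc_succ_top (by omega : 1 ≤ β + 1)]
    simp only [Nat.add_sub_cancel]
    ring
  rw [hsplit, mul_add]
  linarith

noncomputable def NN (q : ℕ → ℂ) : ℕ := ⌈16 * A2 q⌉₊ + 1

noncomputable def CNc (q : ℕ → ℂ) : ℝ :=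
  ∑ α ∈ Finset.Icc 1 (NN q), 2 * (α:ℝ)⁻¹ *
    ∑ s ∈ Finset.Icc 1 (α-1), ‖q (α-s)‖ * Tc q s

noncomputable def Bc (q : ℕ → ℂ) : ℝ :=
  2 * (Real.sqrt 2 * Real.sqrt (A2 q) + CNc q)

lemma inner_bound (q : ℕ → ℂ) (hq : Summable fun n : ℕ => ‖q (n + 1)‖ ^ 2)
    (s : ℕ) (M : ℕ) :
    ∑ α ∈ (Finset.Icc (NN q + 1) M).filter (fun α => s < α),
      (2 * (α:ℝ)⁻¹) * ‖q (α - s)‖ ≤ 1/2 := by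
  set N := NN q with hN
  have hN1 : 1 ≤ N := Nat.le_add_left 1 _
  have hNpos : (0:ℝ) < (N:ℝ) := by exact_mod_cast (by omega : 0 < N)
  have hsq : ∑ α ∈ (Finset.Icc (N+1) M).filter (fun α => s < α),
      (2 * (α:ℝ)⁻¹) ^ 2 ≤ 4 * (N:ℝ)⁻¹ := by
    refine le_trans (Finset.sum_le_sum_of_subset_of_nonneg
      (Finset.filter_subset _ _) (fun _ _ _ => by positivity)) ?_
    have hpt : ∀ α : ℕ, (2 * (α:ℝ)⁻¹)^2 = 4 * ((α:ℝ)⁻¹)^2 := fun α => by ring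
    simp_rw [hpt]
    rw [← Finset.mul_sum]
    have := basel_tail N hN1 M
    linarith
  have hcs := inner_cs q hq s ((Finset.Icc (N+1) M).filter (fun α => s < α))
    (fun α => 2*(α:ℝ)⁻¹) (fun j hj => (Finset.mem_filter.mp hj).2)
    (4 * (N:ℝ)⁻¹) hsq
  refine hcs.trans ?_
  rw [← Real.sqrt_mul (by positivity)]
  have h16 : 16 * A2 q ≤ (N:ℝ) := by
    have h1 := Nat.le_ceil (16 * A2 q)
    have h2 : ((⌈16 * A2 q⌉₊ : ℕ) : ℝ) ≤ ((⌈16 * A2 q⌉₊ + 1 : ℕ) : ℝ) := by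
      push_cast; linarith
    calc 16 * A2 q ≤ ((⌈16 * A2 q⌉₊ : ℕ) : ℝ) := h1
      _ ≤ ((⌈16 * A2 q⌉₊ + 1 : ℕ) : ℝ) := h2
      _ = (N:ℝ) := by rw [hN]; rfl
  have harg : 4 * (N:ℝ)⁻¹ * A2 q ≤ (1/2)^2 := by
    have hA2 := A2_nonneg q
    rw [show 4 * (N:ℝ)⁻¹ * A2 q = (4 * A2 q) / N by ring]
    rw [div_le_iff₀ hNpos]
    nlinarith
  calc Real.sqrt (4 * (N:ℝ)⁻¹ * A2 q) ≤ Real.sqrt ((1/2)^2) := Real.sqrt_le_sqrt harg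
    _ = 1/2 := Real.sqrt_sq (by norm_num)

lemma PB (q : ℕ → ℂ) (hq : Summable fun n : ℕ => ‖q (n + 1)‖ ^ 2) (M : ℕ) :
    ∑ α ∈ Finset.Icc 1 M, Tc q α ≤ Bc q := by
  set N := NN q with hNdef
  have hTle : ∀ α ∈ Finset.Icc 1 M, Tc q α ≤ (α:ℝ)⁻¹ * ‖q α‖
      + 2 * (α:ℝ)⁻¹ * ∑ s ∈ Finset.Icc 1 (α-1), ‖q (α-s)‖ * Tc q s := by
    intro α hα
    obtain ⟨h1, h2⟩ := Finset.mem_Icc.mp hα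
    have hαpos : (0:ℝ) < (α:ℝ) := by exact_mod_cast (by omega : 0 < α)
    have h3 := L3 q h1
    have h4 := mul_le_mul_of_nonneg_left h3 (le_of_lt (inv_pos.mpr hαpos))
    rw [← mul_assoc, inv_mul_cancel₀ (ne_of_gt hαpos), one_mul, mul_add] at h4
    calc Tc q α ≤ (α:ℝ)⁻¹ * ‖q α‖
        + (α:ℝ)⁻¹ * (2 * ∑ s ∈ Finset.Icc 1 (α-1), ‖q (α-s)‖ * Tc q s) := h4
      _ = _ := by ring
  have hmain := Finset.sum_le_sum hTle
  rw [Finset.sum_add_distrib] at hmain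
  have hfirst : ∑ α ∈ Finset.Icc 1 M, (α:ℝ)⁻¹ * ‖q α‖
      ≤ Real.sqrt 2 * Real.sqrt (A2 q) := by
    have h := inner_cs q hq 0 (Finset.Icc 1 M) (fun α => (α:ℝ)⁻¹)
      (fun j hj => (Finset.mem_Icc.mp hj).1) 2 (basel2 M)
    simpa using h
  have hGnn : ∀ α : ℕ, 0 ≤ 2 * (α:ℝ)⁻¹ * ∑ s ∈ Finset.Icc 1 (α-1), ‖q (α-s)‖ * Tc q s := by
    intro α
    have : 0 ≤ ∑ s ∈ Finset.Icc 1 (α-1), ‖q (α-s)‖ * Tc q s :=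
      Finset.sum_nonneg fun s _ => mul_nonneg (norm_nonneg _) (Tc_nonneg q s)
    positivity
  have hsplit := (Finset.sum_filter_add_sum_filter_not (Finset.Icc 1 M)
    (fun α => α ≤ N) (fun α => 2 * (α:ℝ)⁻¹ * ∑ s ∈ Finset.Icc 1 (α-1), ‖q (α-s)‖ * Tc q s)).symm
  have hhead : ∑ α ∈ (Finset.Icc 1 M).filter (fun α => α ≤ N),
      2 * (α:ℝ)⁻¹ * ∑ s ∈ Finset.Icc 1 (α-1), ‖q (α-s)‖ * Tc q s ≤ CNc q := by
    refine Finset.sum_le_sum_of_subset_of_nonneg ?_ (fun α _ _ => hGnn α)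
    intro x hx
    simp only [Finset.mem_filter, Finset.mem_Icc] at hx ⊢
    omega
  have htailset : (Finset.Icc 1 M).filter (fun α => ¬ α ≤ N) = Finset.Icc (N+1) M := by
    ext x
    simp only [Finset.mem_filter, Finset.mem_Icc]
    omega
  have htail : ∑ α ∈ Finset.Icc (N+1) M,
      2 * (α:ℝ)⁻¹ * ∑ s ∈ Finset.Icc 1 (α-1), ‖q (α-s)‖ * Tc q s
      ≤ (1/2) * ∑ α ∈ Finset.Icc 1 M, Tc q α := by
    have hin : ∀ α ∈ Finset.Icc (N+1) M,
        2 * (α:ℝ)⁻¹ * ∑ s ∈ Finset.Icc 1 (α-1), ‖q (α-s)‖ * Tc q s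
        = ∑ s ∈ Finset.Icc 1 M,
            (if s < α then ((2 * (α:ℝ)⁻¹) * ‖q (α-s)‖) * Tc q s else 0) := by
      intro α hα
      obtain ⟨hα1, hα2⟩ := Finset.mem_Icc.mp hα
      rw [← Finset.sum_filter]
      have hfs : (Finset.Icc 1 M).filter (fun s => s < α) = Finset.Icc 1 (α-1) := by
        ext x
        simp only [Finset.mem_filter, Finset.mem_Icc]
        omega
      rw [hfs, Finset.mul_sum]
      exact Finset.sum_congr rfl fun s _ => by ring
    rw [Finset.sum_congr rfl hin, Finset.sum_comm]
    have hs1 : ∀ s ∈ Finset.Icc 1 M,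
        ∑ α ∈ Finset.Icc (N+1) M,
          (if s < α then ((2 * (α:ℝ)⁻¹) * ‖q (α-s)‖) * Tc q s else 0)
        ≤ (1/2) * Tc q s := by
      intro s hs
      have heq : ∑ α ∈ Finset.Icc (N+1) M,
          (if s < α then ((2 * (α:ℝ)⁻¹) * ‖q (α-s)‖) * Tc q s else 0)
          = (∑ α ∈ (Finset.Icc (N+1) M).filter (fun α => s < α),
              (2 * (α:ℝ)⁻¹) * ‖q (α-s)‖) * Tc q s := by
        rw [Finset.sum_mul, Finset.sum_filter]
      rw [heq]
      have := mul_le_mul_of_nonneg_right (inner_bound q hq s M) (Tc_nonneg q s)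
      linarith
    refine le_trans (Finset.sum_le_sum hs1) ?_
    rw [← Finset.mul_sum]
  rw [hsplit, htailset] at hmain
  have hB : Bc q = 2 * (Real.sqrt 2 * Real.sqrt (A2 q) + CNc q) := rfl
  rw [hB]
  linarith

lemma Bc_nonneg (q : ℕ → ℂ) (hq : Summable fun n : ℕ => ‖q (n + 1)‖ ^ 2) :
    0 ≤ Bc q := by simpa using PB q hq 0

lemma Tc_zero (q : ℕ → ℂ) : Tc q 0 = 0 := by
  rw [Tc, Finset.Icc_eq_empty (by omega)]; simp

lemma Tc_summable (q : ℕ → ℂ) (hq : Summable fun n : ℕ => ‖q (n + 1)‖ ^ 2) :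
    Summable (Tc q) := by
  apply summable_of_sum_range_le (c := Bc q) (fun n => Tc_nonneg q n)
  intro M
  have heq : ∑ α ∈ Finset.range M, Tc q α = ∑ α ∈ Finset.Icc 1 (M-1), Tc q α := by
    symm
    apply Finset.sum_subset
    · intro x hx
      simp only [Finset.mem_Icc] at hx
      simp only [Finset.mem_range]
      omega
    · intro x hx hnx
      simp only [Finset.mem_range] at hx
      simp only [Finset.mem_Icc] at hnx
      have hx0 : x = 0 := by omega
      rw [hx0, Tc_zero]
  rw [heq]
  exact PB q hq _

lemma col_single (q : ℕ → ℂ) {n s : ℕ} (hn : 1 ≤ n) (hns : n ≤ s) :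
    ‖Vm q s n‖ ≤ Tc q s :=
  Finset.single_le_sum (fun m _ => norm_nonneg _) (Finset.mem_Icc.mpr ⟨hn, hns⟩)

lemma row_sum_le_B (q : ℕ → ℂ) (hq : Summable fun n : ℕ => ‖q (n + 1)‖ ^ 2)
    {n : ℕ} (hn : 1 ≤ n) (J : ℕ) :
    ∑ s ∈ Finset.Icc n (n + J), ‖Vm q s n‖ ≤ Bc q := by
  calc ∑ s ∈ Finset.Icc n (n + J), ‖Vm q s n‖
      ≤ ∑ s ∈ Finset.Icc n (n + J), Tc q s :=
        Finset.sum_le_sum fun s hs => col_single q hn (Finset.mem_Icc.mp hs).1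
    _ ≤ ∑ s ∈ Finset.Icc 1 (n + J), Tc q s := by
        refine Finset.sum_le_sum_of_subset_of_nonneg ?_ (fun s _ _ => Tc_nonneg q s)
        intro x hx
        simp only [Finset.mem_Icc] at hx ⊢
        omega
    _ ≤ Bc q := PB q hq _

lemma row_bound (q : ℕ → ℂ) (hq : Summable fun n : ℕ => ‖q (n + 1)‖ ^ 2)
    {n : ℕ} (hn : 1 ≤ n) (J : ℕ) :
    ∑ j ∈ Finset.Icc 1 J, ((n + j : ℕ) : ℝ) * ‖Vm q (n + j) n‖
      ≤ (Real.sqrt 2 * Real.sqrt (A2 q)) * ∑ s ∈ Finset.Icc n (n + J), ‖Vm q s n‖ := by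
  have key : ∀ j ∈ Finset.Icc 1 J, ((n + j : ℕ) : ℝ) * ‖Vm q (n+j) n‖
      ≤ (j:ℝ)⁻¹ * ∑ s ∈ Finset.Icc n (n+j-1), ‖q (n+j-s)‖ * ‖Vm q s n‖ := by
    intro j hj
    obtain ⟨hj1, hj2⟩ := Finset.mem_Icc.mp hj
    have hL := L1 q hn (by omega : n < n + j)
    have hjpos : (0:ℝ) < (j:ℝ) := by exact_mod_cast (by omega : 0 < j)
    have hcast : ((n+j : ℕ):ℝ) - (n:ℝ) = (j:ℝ) := by push_cast; ring
    rw [hcast] at hL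
    have hrw : ((n+j:ℕ):ℝ) * ‖Vm q (n+j) n‖
        = (j:ℝ)⁻¹ * (((n+j:ℕ):ℝ) * (j:ℝ) * ‖Vm q (n+j) n‖) := by
      field_simp
    rw [hrw]
    refine mul_le_mul_of_nonneg_left ?_ (by positivity)
    exact hL
  refine le_trans (Finset.sum_le_sum key) ?_
  have hin : ∀ j ∈ Finset.Icc 1 J,
      (j:ℝ)⁻¹ * ∑ s ∈ Finset.Icc n (n+j-1), ‖q (n+j-s)‖ * ‖Vm q s n‖
      = ∑ s ∈ Finset.Icc n (n+J),
          (if s < n + j then (j:ℝ)⁻¹ * ‖q (n+j-s)‖ * ‖Vm q s n‖ else 0) := by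
    intro j hj
    obtain ⟨hj1, hj2⟩ := Finset.mem_Icc.mp hj
    rw [← Finset.sum_filter]
    have hfs : (Finset.Icc n (n+J)).filter (fun s => s < n + j)
        = Finset.Icc n (n+j-1) := by
      ext x
      simp only [Finset.mem_filter, Finset.mem_Icc]
      omega
    rw [hfs, Finset.mul_sum]
    exact Finset.sum_congr rfl fun s _ => by ring
  rw [Finset.sum_congr rfl hin, Finset.sum_comm]
  have hs1 : ∀ s ∈ Finset.Icc n (n+J),
      ∑ j ∈ Finset.Icc 1 J,
        (if s < n + j then (j:ℝ)⁻¹ * ‖q (n+j-s)‖ * ‖Vm q s n‖ else 0)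
      ≤ (Real.sqrt 2 * Real.sqrt (A2 q)) * ‖Vm q s n‖ := by
    intro s hs
    obtain ⟨hsn, hsJ⟩ := Finset.mem_Icc.mp hs
    have heq : ∑ j ∈ Finset.Icc 1 J,
        (if s < n + j then (j:ℝ)⁻¹ * ‖q (n+j-s)‖ * ‖Vm q s n‖ else 0)
        = (∑ j ∈ (Finset.Icc 1 J).filter (fun j => s < n + j),
            (j:ℝ)⁻¹ * ‖q (n+j-s)‖) * ‖Vm q s n‖ := by
      rw [Finset.sum_mul, Finset.sum_filter]
    rw [heq]
    refine mul_le_mul_of_nonneg_right ?_ (norm_nonneg _)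
    have hrw2 : ∑ j ∈ (Finset.Icc 1 J).filter (fun j => s < n + j),
        (j:ℝ)⁻¹ * ‖q (n+j-s)‖
        = ∑ j ∈ (Finset.Icc 1 J).filter (fun j => s < n + j),
            (j:ℝ)⁻¹ * ‖q (j - (s - n))‖ := by
      refine Finset.sum_congr rfl fun j hj => ?_
      have hj' := (Finset.mem_filter.mp hj).2
      have hidx : n + j - s = j - (s - n) := by omega
      rw [hidx]
    rw [hrw2]
    have hmem : ∀ j ∈ (Finset.Icc 1 J).filter (fun j => s < n + j), s - n < j := by
      intro j hj
      have h1 := (Finset.mem_filter.mp hj).2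
      have h2 := Finset.mem_Icc.mp (Finset.mem_filter.mp hj).1
      omega
    have hc2 : ∑ j ∈ (Finset.Icc 1 J).filter (fun j => s < n + j), ((j:ℝ)⁻¹) ^ 2 ≤ 2 :=
      le_trans (Finset.sum_le_sum_of_subset_of_nonneg (Finset.filter_subset _ _)
        (fun _ _ _ => by positivity)) (basel2 J)
    exact inner_cs q hq (s - n) _ (fun j => (j:ℝ)⁻¹) hmem 2 hc2
  refine le_trans (Finset.sum_le_sum hs1) ?_
  rw [Finset.mul_sum]

lemma rowl1_summable (q : ℕ → ℂ) (hq : Summable fun n : ℕ => ‖q (n + 1)‖ ^ 2)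
    {n : ℕ} (hn : 1 ≤ n) : Summable fun i : ℕ => ‖Vm q (n + i) n‖ := by
  have h1 : Summable fun i : ℕ => Tc q (n + i) := by
    have := (Tc_summable q hq).comp_injective (add_right_injective n)
    exact this
  exact Summable.of_nonneg_of_le (fun i => norm_nonneg _)
    (fun i => col_single q hn (Nat.le_add_right n i)) h1

lemma conv1 (q : ℕ → ℂ) (hq : Summable fun n : ℕ => ‖q (n + 1)‖ ^ 2)
    {n : ℕ} (hn : 1 ≤ n) :
    Summable fun k : ℕ => ((n + k : ℕ) : ℝ) * ‖Vm q (n + k) n‖ := by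
  have hC : 0 ≤ (Real.sqrt 2 * Real.sqrt (A2 q)) * Bc q :=
    mul_nonneg (by positivity) (Bc_nonneg q hq)
  apply summable_of_sum_range_le
    (c := (n:ℝ) * ‖Vm q n n‖ + (Real.sqrt 2 * Real.sqrt (A2 q)) * Bc q)
    (fun k => by positivity)
  intro K
  rcases Nat.eq_zero_or_pos K with h | h
  · subst h; simp; positivity
  · have hsplit : Finset.range K = insert 0 (Finset.Icc 1 (K-1)) := by
      ext x
      simp only [Finset.mem_range, Finset.mem_insert, Finset.mem_Icc]
      omega
    rw [hsplit, Finset.sum_insert (by simp)]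
    simp only [Nat.add_zero]
    have hrb := row_bound q hq hn (K-1)
    have hrB := row_sum_le_B q hq hn (K-1)
    have h2 : (Real.sqrt 2 * Real.sqrt (A2 q)) * ∑ s ∈ Finset.Icc n (n + (K-1)), ‖Vm q s n‖
        ≤ (Real.sqrt 2 * Real.sqrt (A2 q)) * Bc q :=
      mul_le_mul_of_nonneg_left hrB (by positivity)
    have := hrb.trans h2
    linarith

lemma row_tsum_le (q : ℕ → ℂ) (hq : Summable fun n : ℕ => ‖q (n + 1)‖ ^ 2)
    {n : ℕ} (hn : 1 ≤ n) :
    ∑' k : ℕ, ((n + k : ℕ) : ℝ) * ‖Vm q (n + k) n‖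
      ≤ (n:ℝ) * ‖Vm q n n‖
        + (Real.sqrt 2 * Real.sqrt (A2 q)) * ∑' i : ℕ, ‖Vm q (n + i) n‖ := by
  have hρ : Summable fun i : ℕ => ‖Vm q (n + i) n‖ := rowl1_summable q hq hn
  have hρnn : 0 ≤ ∑' i : ℕ, ‖Vm q (n + i) n‖ := tsum_nonneg fun i => norm_nonneg _
  apply Real.tsum_le_of_sum_range_le (fun k => by positivity)
  intro K
  rcases Nat.eq_zero_or_pos K with h | h
  · subst h; simp; positivity
  · have hsplit : Finset.range K = insert 0 (Finset.Icc 1 (K-1)) := by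
      ext x
      simp only [Finset.mem_range, Finset.mem_insert, Finset.mem_Icc]
      omega
    rw [hsplit, Finset.sum_insert (by simp)]
    simp only [Nat.add_zero]
    have hrb := row_bound q hq hn (K-1)
    have hfin : ∑ s ∈ Finset.Icc n (n + (K-1)), ‖Vm q s n‖
        ≤ ∑' i : ℕ, ‖Vm q (n + i) n‖ := by
      rw [← Finset.Ico_add_one_right_eq_Icc, Finset.sum_Ico_eq_sum_range]
      have hidx : n + (K-1) + 1 - n = K - 1 + 1 := by omega
      rw [hidx]
      exact Summable.sum_le_tsum _ (fun i _ => norm_nonneg _) hρ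
    have h2 := mul_le_mul_of_nonneg_left hfin
      (by positivity : (0:ℝ) ≤ Real.sqrt 2 * Real.sqrt (A2 q))
    have := hrb.trans h2
    linarith

lemma rect_bound (q : ℕ → ℂ) (hq : Summable fun n : ℕ => ‖q (n + 1)‖ ^ 2) (N I : ℕ) :
    ∑ i ∈ Finset.range I, ∑ n ∈ Finset.range N, ‖Vm q (n + 1 + i) (n + 1)‖ ≤ Bc q := by
  rw [Finset.sum_comm]
  set R := N + I with hR
  have hinj : ∀ x ∈ Finset.range N ×ˢ Finset.range I, ∀ y ∈ Finset.range N ×ˢ Finset.range I,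
      (fun p : ℕ×ℕ => (p.1 + 1 + p.2, p.1 + 1)) x = (fun p : ℕ×ℕ => (p.1 + 1 + p.2, p.1 + 1)) y
      → x = y := by
    intro x _ y _ hxy
    simp only [Prod.mk.injEq] at hxy
    ext <;> omega
  have h1 : ∑ p ∈ (Finset.range N ×ˢ Finset.range I).image
        (fun p : ℕ×ℕ => (p.1 + 1 + p.2, p.1 + 1)), ‖Vm q p.1 p.2‖
      = ∑ n ∈ Finset.range N, ∑ i ∈ Finset.range I, ‖Vm q (n + 1 + i) (n + 1)‖ := by
    rw [Finset.sum_image hinj, Finset.sum_product]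
  rw [← h1]
  have hsub : (Finset.range N ×ˢ Finset.range I).image
      (fun p : ℕ×ℕ => (p.1 + 1 + p.2, p.1 + 1)) ⊆ Finset.Icc 1 R ×ˢ Finset.Icc 1 R := by
    intro p hp
    obtain ⟨x, hx, rfl⟩ := Finset.mem_image.mp hp
    have hx' := Finset.mem_product.mp hx
    simp only [Finset.mem_range] at hx'
    simp only [Finset.mem_product, Finset.mem_Icc]
    omega
  refine le_trans (Finset.sum_le_sum_of_subset_of_nonneg hsub
    (fun _ _ _ => norm_nonneg _)) ?_
  rw [Finset.sum_product]
  have hTc : ∀ α ∈ Finset.Icc 1 R, ∑ m ∈ Finset.Icc 1 R, ‖Vm q α m‖ = Tc q α := by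
    intro α hα
    obtain ⟨hα1, hα2⟩ := Finset.mem_Icc.mp hα
    rw [Tc]
    symm
    apply Finset.sum_subset
    · intro x hx
      simp only [Finset.mem_Icc] at hx ⊢
      omega
    · intro x hx hnx
      simp only [Finset.mem_Icc] at hx hnx
      rw [Vm_zero q (by omega)]
      simp
  rw [Finset.sum_congr rfl hTc]
  exact PB q hq R

lemma rho_summable (q : ℕ → ℂ) (hq : Summable fun n : ℕ => ‖q (n + 1)‖ ^ 2) :
    Summable (fun n : ℕ => ∑' i : ℕ, ‖Vm q (n + 1 + i) (n + 1)‖) := by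
  apply summable_of_sum_range_le (c := Bc q)
    (fun n => tsum_nonneg fun i => norm_nonneg _)
  intro N
  have hsummable : ∀ n ∈ Finset.range N, Summable fun i : ℕ => ‖Vm q (n + 1 + i) (n + 1)‖ :=
    fun n _ => rowl1_summable q hq (Nat.succ_le_succ (Nat.zero_le n))
  rw [← Summable.tsum_finsetSum hsummable]
  exact Real.tsum_le_of_sum_range_le
    (fun i => Finset.sum_nonneg fun n _ => norm_nonneg _)
    (fun I => rect_bound q hq N I)

lemma diag_summable (q : ℕ → ℂ) (hq : Summable fun n : ℕ => ‖q (n + 1)‖ ^ 2) :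
    Summable fun n : ℕ => ‖Vm q (n + 1) (n + 1)‖ := by
  have h1 : Summable fun n : ℕ => Tc q (n + 1) := by
    have := (Tc_summable q hq).comp_injective (add_left_injective 1)
    exact this
  exact Summable.of_nonneg_of_le (fun n => norm_nonneg _)
    (fun n => col_single q (Nat.succ_le_succ (Nat.zero_le n)) le_rfl) h1

theorem stmt0 (q : ℕ → ℂ) (hq : Summable fun n : ℕ => ‖q (n + 1)‖ ^ 2) :
    ∃ V : ℕ → ℕ → ℂ, Recur q V ∧ Conv V := by
  refine ⟨fun n α => Vm q α n, ⟨fun n α hn hna => recur1 q n α hn hna,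
    fun α hα => recur2 q α hα⟩, fun n hn => conv1 q hq hn, ?_⟩
  set C := Real.sqrt 2 * Real.sqrt (A2 q) with hC
  have hCnn : 0 ≤ C := by positivity
  have hmaj : Summable (fun n : ℕ =>
      ‖Vm q (n+1) (n+1)‖ + C * ∑' i : ℕ, ‖Vm q (n+1+i) (n+1)‖) :=
    (diag_summable q hq).add ((rho_summable q hq).mul_left C)
  refine Summable.of_nonneg_of_le (fun n => ?_) (fun n => ?_) hmaj
  · exact mul_nonneg (by positivity) (tsum_nonneg fun k => by positivity)
  · show ((n:ℝ)+1)⁻¹ * ∑' (k:ℕ), ((n+1+k : ℕ):ℝ) * ‖Vm q (n+1+k) (n+1)‖ ≤ _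
    have hrow := row_tsum_le q hq (n := n+1) (Nat.succ_le_succ (Nat.zero_le n))
    have hρnn : 0 ≤ ∑' i : ℕ, ‖Vm q (n+1+i) (n+1)‖ := tsum_nonneg fun i => norm_nonneg _
    have hpos : (0:ℝ) < (n:ℝ) + 1 := by positivity
    have h1n : (1:ℝ) ≤ (n:ℝ) + 1 := by
      have : (0:ℝ) ≤ (n:ℝ) := Nat.cast_nonneg n
      linarith
    have hinv1 : ((n:ℝ)+1)⁻¹ ≤ 1 := by
      rw [inv_le_one_iff₀]
      right
      exact h1n
    calc ((n:ℝ)+1)⁻¹ * ∑' (k:ℕ), ((n+1+k : ℕ):ℝ) * ‖Vm q (n+1+k) (n+1)‖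
        ≤ ((n:ℝ)+1)⁻¹ * ((((n+1:ℕ)):ℝ) * ‖Vm q (n+1) (n+1)‖
            + C * ∑' i : ℕ, ‖Vm q (n+1+i) (n+1)‖) :=
          mul_le_mul_of_nonneg_left hrow (by positivity)
      _ = ‖Vm q (n+1) (n+1)‖
            + ((n:ℝ)+1)⁻¹ * (C * ∑' i : ℕ, ‖Vm q (n+1+i) (n+1)‖) := by
          push_cast
          field_simp
      _ ≤ ‖Vm q (n+1) (n+1)‖ + C * ∑' i : ℕ, ‖Vm q (n+1+i) (n+1)‖ := by
          have h2 := mul_le_mul_of_nonneg_right hinv1 (mul_nonneg hCnn hρnn)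
          rw [one_mul] at h2
          linarith
end

section
/- Let λ ∈ ℂ with n + 2λ ≠ 0 and n − 2λ ≠ 0 for all integers n ≥ 1. Then for every x ∈ ℝ, the Wronskian ∂ₓf₁⁺(x,λ)·f₁⁻(x,λ) − f₁⁺(x,λ)·∂ₓf₁⁻(x,λ) equals 2iλ. -/
set_option maxHeartbeats 1000000


open Complex MeasureTheory Filter Topology

/-- Fourier coefficients of `e^{-iμx} f₁(x,μ)`. -/
noncomputable def FF (V : ℕ → ℕ → ℂ) (mu : ℂ) : ℕ → ℂ := fun γ =>
  if γ = 0 then 1 else ∑ n ∈ Finset.range γ, (((n : ℂ) + 1) + 2 * mu)⁻¹ * V (n + 1) γ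

lemma sum_swap_dep (γ : ℕ) (f : ℕ → ℕ → ℂ) :
    ∑ n ∈ Finset.range γ, ∑ s ∈ Finset.Icc (n + 1) (γ - 1), f n s
      = ∑ s ∈ Finset.Icc 1 (γ - 1), ∑ n ∈ Finset.range s, f n s := by
  rw [Finset.sum_sigma', Finset.sum_sigma']
  refine Finset.sum_nbij' (fun p => ⟨p.2, p.1⟩) (fun p => ⟨p.2, p.1⟩) ?_ ?_ ?_ ?_ ?_
  · rintro ⟨n, s⟩ h
    simp only [Finset.mem_sigma, Finset.mem_range, Finset.mem_Icc] at h ⊢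
    omega
  · rintro ⟨s, n⟩ h
    simp only [Finset.mem_sigma, Finset.mem_range, Finset.mem_Icc] at h ⊢
    omega
  · rintro ⟨n, s⟩ _; rfl
  · rintro ⟨s, n⟩ _; rfl
  · rintro ⟨n, s⟩ _; rfl

/-- The key algebraic identity: `γ(γ+2μ)·FFγ + ∑_{α<γ} q_{γ-α}·FFα = 0`. -/
lemma keyK (q : ℕ → ℂ) (V : ℕ → ℕ → ℂ) (hR : Recur q V) (mu : ℂ)
    (hmu : ∀ n : ℕ, 1 ≤ n → (n : ℂ) + 2 * mu ≠ 0) (γ : ℕ) (hγ : 1 ≤ γ) :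
    (γ : ℂ) * ((γ : ℂ) + 2 * mu) * FF V mu γ
      + ∑ α ∈ Finset.range γ, q (γ - α) * FF V mu α = 0 := by
  have hγ0 : γ ≠ 0 := by omega
  -- expand FF at γ
  have hFF : FF V mu γ = ∑ n ∈ Finset.range γ, (((n : ℂ) + 1) + 2 * mu)⁻¹ * V (n + 1) γ :=
    if_neg hγ0
  -- step A: expand the first product
  have hA : (γ : ℂ) * ((γ : ℂ) + 2 * mu) * FF V mu γ
      = (γ : ℂ) * ∑ n ∈ Finset.range γ, V (n + 1) γ
        + ∑ n ∈ Finset.range γ,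
            ((γ : ℂ) * ((γ : ℂ) - ((n : ℂ) + 1)))
              * ((((n : ℂ) + 1) + 2 * mu)⁻¹ * V (n + 1) γ) := by
    rw [hFF, Finset.mul_sum, Finset.mul_sum, ← Finset.sum_add_distrib]
    refine Finset.sum_congr rfl fun n _ => ?_
    have h1 : (((n : ℂ) + 1) + 2 * mu) * (((n : ℂ) + 1) + 2 * mu)⁻¹ = 1 := by
      refine mul_inv_cancel₀ ?_
      have h := hmu (n + 1) (by omega)
      push_cast at h
      exact h
    linear_combination ((γ : ℂ) * V (n + 1) γ) * h1
  -- step B: apply the recurrence (R1) termwise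
  have hB : ∀ n ∈ Finset.range γ,
      ((γ : ℂ) * ((γ : ℂ) - ((n : ℂ) + 1)))
          * ((((n : ℂ) + 1) + 2 * mu)⁻¹ * V (n + 1) γ)
        = -∑ s ∈ Finset.Icc (n + 1) (γ - 1),
            (((n : ℂ) + 1) + 2 * mu)⁻¹ * (q (γ - s) * V (n + 1) s) := by
    intro n hn
    rw [Finset.mem_range] at hn
    rcases eq_or_lt_of_le (Nat.succ_le_of_lt hn) with heq | hlt
    · -- n + 1 = γ : both sides vanish
      have h0 : ((γ : ℂ) - ((n : ℂ) + 1)) = 0 := by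
        rw [← heq]; push_cast; ring
      have hempty : Finset.Icc (n + 1) (γ - 1) = ∅ := Finset.Icc_eq_empty (by omega)
      rw [h0, hempty]
      simp
    · -- n + 1 < γ : use R1
      have h1 := hR.1 (n + 1) γ (by omega) hlt
      have hcast : ((n + 1 : ℕ) : ℂ) = (n : ℂ) + 1 := by push_cast; ring
      rw [hcast] at h1
      have h2 : (γ : ℂ) * ((γ : ℂ) - ((n : ℂ) + 1)) * V (n + 1) γ
          = -∑ s ∈ Finset.Icc (n + 1) (γ - 1), q (γ - s) * V (n + 1) s := by
        linear_combination h1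
      calc ((γ : ℂ) * ((γ : ℂ) - ((n : ℂ) + 1)))
            * ((((n : ℂ) + 1) + 2 * mu)⁻¹ * V (n + 1) γ)
          = (((n : ℂ) + 1) + 2 * mu)⁻¹
              * ((γ : ℂ) * ((γ : ℂ) - ((n : ℂ) + 1)) * V (n + 1) γ) := by ring
        _ = (((n : ℂ) + 1) + 2 * mu)⁻¹
              * (-∑ s ∈ Finset.Icc (n + 1) (γ - 1), q (γ - s) * V (n + 1) s) := by rw [h2]
        _ = -∑ s ∈ Finset.Icc (n + 1) (γ - 1),
              (((n : ℂ) + 1) + 2 * mu)⁻¹ * (q (γ - s) * V (n + 1) s) := by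
            rw [mul_neg, Finset.mul_sum]
  -- step C: swap the double sum
  have hC : ∑ n ∈ Finset.range γ, ∑ s ∈ Finset.Icc (n + 1) (γ - 1),
        (((n : ℂ) + 1) + 2 * mu)⁻¹ * (q (γ - s) * V (n + 1) s)
      = ∑ s ∈ Finset.Icc 1 (γ - 1), q (γ - s) * FF V mu s := by
    rw [sum_swap_dep]
    refine Finset.sum_congr rfl fun s hs => ?_
    rw [Finset.mem_Icc] at hs
    have hs0 : s ≠ 0 := by omega
    rw [FF, if_neg hs0, Finset.mul_sum]
    exact Finset.sum_congr rfl fun n _ => by ring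
  -- step R2: first sum
  have hR2 : (γ : ℂ) * ∑ n ∈ Finset.range γ, V (n + 1) γ = -q γ := by
    have h := hR.2 γ hγ
    have : ∑ n ∈ Finset.Icc 1 γ, V n γ = ∑ n ∈ Finset.range γ, V (n + 1) γ := by
      rw [← Finset.Ico_add_one_right_eq_Icc, Finset.sum_Ico_eq_sum_range]
      exact Finset.sum_congr (by congr 1) fun n _ => by rw [Nat.add_comm 1 n]
    rw [this] at h
    linear_combination h
  -- split the final sum
  have hsplit : ∑ α ∈ Finset.range γ, q (γ - α) * FF V mu α
      = q γ + ∑ s ∈ Finset.Icc 1 (γ - 1), q (γ - s) * FF V mu s := by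
    rw [Finset.range_eq_Ico, Finset.sum_eq_sum_Ico_succ_bot (by omega : 0 < γ)]
    have h1 : q (γ - 0) * FF V mu 0 = q γ := by simp [FF]
    have h2 : Finset.Ico (0 + 1) γ = Finset.Icc 1 (γ - 1) := by
      ext a; simp only [Finset.mem_Ico, Finset.mem_Icc]; omega
    rw [h1, h2]
  -- assemble
  rw [hA, hsplit, Finset.sum_congr rfl hB, Finset.sum_neg_distrib, hC, hR2]
  ring

lemma tripleswap (q A B : ℕ → ℂ) (γ : ℕ) :
    ∑ p ∈ Finset.HasAntidiagonal.antidiagonal γ, ∑ s ∈ Finset.range p.1, q (p.1 - s) * (A s * B p.2)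
      = ∑ p ∈ Finset.HasAntidiagonal.antidiagonal γ, ∑ s ∈ Finset.range p.2, q (p.2 - s) * (A p.1 * B s) := by
  rw [Finset.sum_sigma', Finset.sum_sigma']
  refine Finset.sum_nbij' (fun x => ⟨(x.2, γ - x.2), x.1.2⟩)
    (fun x => ⟨(γ - x.2, x.2), x.1.1⟩) ?_ ?_ ?_ ?_ ?_
  · rintro ⟨⟨a, b⟩, s⟩ h
    simp only [Finset.mem_sigma, Finset.HasAntidiagonal.mem_antidiagonal, Finset.mem_range] at h ⊢
    omega
  · rintro ⟨⟨a, b⟩, s⟩ h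
    simp only [Finset.mem_sigma, Finset.HasAntidiagonal.mem_antidiagonal, Finset.mem_range] at h ⊢
    omega
  · rintro ⟨⟨a, b⟩, s⟩ h
    simp only [Finset.mem_sigma, Finset.HasAntidiagonal.mem_antidiagonal, Finset.mem_range] at h
    have h1 : γ - b = a := by omega
    simp [h1]
  · rintro ⟨⟨a, b⟩, s⟩ h
    simp only [Finset.mem_sigma, Finset.HasAntidiagonal.mem_antidiagonal, Finset.mem_range] at h
    have h1 : γ - a = b := by omega
    simp [h1]
  · rintro ⟨⟨a, b⟩, s⟩ h
    simp only [Finset.mem_sigma, Finset.HasAntidiagonal.mem_antidiagonal, Finset.mem_range] at h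
    have : γ - s - b = a - s := by omega
    simp only [this]

lemma Dvanish (q : ℕ → ℂ) (V : ℕ → ℕ → ℂ) (hR : Recur q V) (lam : ℂ)
    (hlamp : ∀ n : ℕ, 1 ≤ n → (n : ℂ) + 2 * lam ≠ 0)
    (hlamm : ∀ n : ℕ, 1 ≤ n → (n : ℂ) - 2 * lam ≠ 0)
    (γ : ℕ) (hγ : 1 ≤ γ) :
    ∑ p ∈ Finset.HasAntidiagonal.antidiagonal γ,
        (2 * lam + (p.1 : ℂ) - (p.2 : ℂ)) * (FF V lam p.1 * FF V (-lam) p.2) = 0 := by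
  have hmu' : ∀ n : ℕ, 1 ≤ n → (n : ℂ) + 2 * (-lam) ≠ 0 := by
    intro n hn h
    exact hlamm n hn (by linear_combination h)
  have hKp : ∀ α : ℕ, (α : ℂ) * ((α : ℂ) + 2 * lam) * FF V lam α
      = -∑ s ∈ Finset.range α, q (α - s) * FF V lam s := by
    intro α
    rcases Nat.eq_zero_or_pos α with h | h
    · subst h; simp
    · linear_combination keyK q V hR lam hlamp α h
  have hKm : ∀ β : ℕ, (β : ℂ) * ((β : ℂ) - 2 * lam) * FF V (-lam) β
      = -∑ s ∈ Finset.range β, q (β - s) * FF V (-lam) s := by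
    intro β
    rcases Nat.eq_zero_or_pos β with h | h
    · subst h; simp
    · linear_combination keyK q V hR (-lam) hmu' β h
  have key : ∀ p ∈ Finset.HasAntidiagonal.antidiagonal γ,
      (γ : ℂ) * ((2 * lam + (p.1 : ℂ) - (p.2 : ℂ)) * (FF V lam p.1 * FF V (-lam) p.2))
        = -(∑ s ∈ Finset.range p.1, q (p.1 - s) * (FF V lam s * FF V (-lam) p.2))
          + ∑ s ∈ Finset.range p.2, q (p.2 - s) * (FF V lam p.1 * FF V (-lam) s) := by
    intro p hp
    rw [Finset.HasAntidiagonal.mem_antidiagonal] at hp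
    have hc : (p.1 : ℂ) + (p.2 : ℂ) = (γ : ℂ) := by exact_mod_cast congrArg (Nat.cast : ℕ → ℂ) hp
    have e1' : ((p.1 : ℂ) * ((p.1 : ℂ) + 2 * lam) * FF V lam p.1) * FF V (-lam) p.2
        = -∑ s ∈ Finset.range p.1, q (p.1 - s) * (FF V lam s * FF V (-lam) p.2) := by
      rw [hKp p.1, neg_mul, Finset.sum_mul]
      congr 1
      exact Finset.sum_congr rfl fun s _ => by ring
    have e2' : FF V lam p.1 * ((p.2 : ℂ) * ((p.2 : ℂ) - 2 * lam) * FF V (-lam) p.2)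
        = -∑ s ∈ Finset.range p.2, q (p.2 - s) * (FF V lam p.1 * FF V (-lam) s) := by
      rw [hKm p.2, mul_neg, Finset.mul_sum]
      congr 1
      exact Finset.sum_congr rfl fun s _ => by ring
    linear_combination e1' - e2'
      + (-(2 * lam + (p.1 : ℂ) - (p.2 : ℂ)) * (FF V lam p.1 * FF V (-lam) p.2)) * hc
  have hγC : (γ : ℂ) ≠ 0 := Nat.cast_ne_zero.mpr (by omega)
  have hmain : ∑ p ∈ Finset.HasAntidiagonal.antidiagonal γ,
      (γ : ℂ) * ((2 * lam + (p.1 : ℂ) - (p.2 : ℂ)) * (FF V lam p.1 * FF V (-lam) p.2)) = 0 := by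
    rw [Finset.sum_congr rfl key, Finset.sum_add_distrib, Finset.sum_neg_distrib,
      tripleswap q (FF V lam) (FF V (-lam)) γ]
    exact neg_add_cancel _
  rw [← Finset.mul_sum] at hmain
  exact (mul_eq_zero.mp hmain).resolve_left hγC

lemma invBound (mu : ℂ) :
    ∃ C : ℝ, 0 ≤ C ∧ ∀ n : ℕ, ‖(((n : ℂ) + 1) + 2 * mu)⁻¹‖ ≤ C * ((n : ℝ) + 1)⁻¹ := by
  set N : ℕ := ⌈4 * ‖mu‖⌉₊ with hN
  set C : ℝ := 2 + ∑ j ∈ Finset.range N, ((j : ℝ) + 1) * ‖(((j : ℂ) + 1) + 2 * mu)⁻¹‖ with hC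
  have hsumnn : 0 ≤ ∑ j ∈ Finset.range N, ((j : ℝ) + 1) * ‖(((j : ℂ) + 1) + 2 * mu)⁻¹‖ :=
    Finset.sum_nonneg fun j _ => mul_nonneg (by positivity) (norm_nonneg _)
  have hCnn : 0 ≤ C := by rw [hC]; linarith
  have bnd : ∀ n : ℕ, ((n : ℝ) + 1) * ‖(((n : ℂ) + 1) + 2 * mu)⁻¹‖ ≤ C := by
    intro n
    rcases lt_or_ge n N with h | h
    · have hle : ((n : ℝ) + 1) * ‖(((n : ℂ) + 1) + 2 * mu)⁻¹‖
          ≤ ∑ j ∈ Finset.range N, ((j : ℝ) + 1) * ‖(((j : ℂ) + 1) + 2 * mu)⁻¹‖ :=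
        Finset.single_le_sum (f := fun j : ℕ => ((j : ℝ) + 1) * ‖(((j : ℂ) + 1) + 2 * mu)⁻¹‖)
          (fun j _ => mul_nonneg (by positivity) (norm_nonneg _)) (Finset.mem_range.mpr h)
      rw [hC]; linarith
    · have h4 : 4 * ‖mu‖ ≤ (n : ℝ) := le_trans (Nat.le_ceil _) (by exact_mod_cast h)
      have hn1 : ‖((n : ℂ) + 1)‖ = (n : ℝ) + 1 := by
        rw [show ((n : ℂ) + 1) = (((n + 1 : ℕ)) : ℂ) by push_cast; ring, Complex.norm_natCast]
        push_cast; ring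
      have h2mu : ‖(2 : ℂ) * mu‖ = 2 * ‖mu‖ := by rw [norm_mul]; norm_num
      have hlow : ((n : ℝ) + 1) / 2 ≤ ‖(((n : ℂ) + 1) + 2 * mu)‖ := by
        have h1 : ‖((n : ℂ) + 1)‖ - ‖(2 : ℂ) * mu‖ ≤ ‖(((n : ℂ) + 1) + 2 * mu)‖ := by
          have h2 : ‖((n : ℂ) + 1)‖ ≤ ‖(((n : ℂ) + 1) + 2 * mu)‖ + ‖(2 : ℂ) * mu‖ := by
            calc ‖((n : ℂ) + 1)‖ = ‖(((n : ℂ) + 1) + 2 * mu) - 2 * mu‖ := by congr 1; ring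
              _ ≤ ‖(((n : ℂ) + 1) + 2 * mu)‖ + ‖(2 : ℂ) * mu‖ := norm_sub_le _ _
          linarith
        rw [hn1, h2mu] at h1
        linarith
      have hpos : (0 : ℝ) < ((n : ℝ) + 1) / 2 := by positivity
      have hinv : ‖(((n : ℂ) + 1) + 2 * mu)⁻¹‖ ≤ (((n : ℝ) + 1) / 2)⁻¹ := by
        rw [norm_inv]
        exact inv_anti₀ hpos hlow
      have : ((n : ℝ) + 1) * ‖(((n : ℂ) + 1) + 2 * mu)⁻¹‖ ≤ 2 := by
        have hn1pos : (0 : ℝ) < (n : ℝ) + 1 := by positivity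
        calc ((n : ℝ) + 1) * ‖(((n : ℂ) + 1) + 2 * mu)⁻¹‖
            ≤ ((n : ℝ) + 1) * (((n : ℝ) + 1) / 2)⁻¹ := by
              exact mul_le_mul_of_nonneg_left hinv (le_of_lt hn1pos)
          _ = 2 := by field_simp
      rw [hC]; linarith
  refine ⟨C, hCnn, fun n => ?_⟩
  have hpos : (0 : ℝ) < (n : ℝ) + 1 := by positivity
  rw [← div_eq_mul_inv, le_div_iff₀ hpos]
  calc ‖(((n : ℂ) + 1) + 2 * mu)⁻¹‖ * ((n : ℝ) + 1)
      = ((n : ℝ) + 1) * ‖(((n : ℂ) + 1) + 2 * mu)⁻¹‖ := by ring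
    _ ≤ C := bnd n

lemma sumConv (V : ℕ → ℕ → ℂ) (hC : Conv V) :
    Summable (fun p : ℕ × ℕ =>
      ((p.1 : ℝ) + 1)⁻¹ * (((p.1 + 1 + p.2 : ℕ)) : ℝ) * ‖V (p.1 + 1) (p.1 + 1 + p.2)‖) := by
  rw [summable_prod_of_nonneg (fun p => by positivity)]
  constructor
  · intro n
    have h := (hC.1 (n + 1) (by omega)).mul_left (((n : ℝ) + 1)⁻¹)
    refine h.congr fun k => ?_
    simp only []
    ring
  · refine hC.2.congr fun n => ?_
    rw [← tsum_mul_left]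
    refine tsum_congr fun k => ?_
    ring

/-- Summability of `γ ↦ (γ+1)‖FF_{γ+1}‖`. -/
lemma summable_keyFF (V : ℕ → ℕ → ℂ) (hC : Conv V) (mu : ℂ) :
    Summable fun γ : ℕ => ((γ : ℝ) + 1) * ‖FF V mu (γ + 1)‖ := by
  obtain ⟨C, hC0, hCb⟩ := invBound mu
  set g : ℕ × ℕ → ℝ := fun p =>
    C * (((p.1 : ℝ) + 1)⁻¹ * (((p.1 + 1 + p.2 : ℕ)) : ℝ) * ‖V (p.1 + 1) (p.1 + 1 + p.2)‖)
    with hg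
  have hgsum : Summable g := by
    have := (sumConv V hC).mul_left C
    exact this.congr fun p => by rw [hg]
  have hgnn : ∀ p, 0 ≤ g p := fun p => by
    rw [hg]
    have : (0:ℝ) ≤ ((p.1 : ℝ) + 1)⁻¹ * (((p.1 + 1 + p.2 : ℕ)) : ℝ) * ‖V (p.1 + 1) (p.1 + 1 + p.2)‖ := by
      positivity
    exact mul_nonneg hC0 this
  -- summability of antidiagonal sums of g
  have hsig : Summable fun γ : ℕ => ∑ p ∈ Finset.HasAntidiagonal.antidiagonal γ, g p := by
    have he : Summable (g ∘ (Finset.HasAntidiagonal.sigmaAntidiagonalEquivProd (A := ℕ))) :=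
      (Equiv.summable_iff _).mpr hgsum
    have hs := he.sigma
    refine hs.congr fun γ => ?_
    rw [← Finset.tsum_subtype]
    rfl
  refine Summable.of_nonneg_of_le (fun γ => by positivity) (fun γ => ?_) hsig
  -- bound : (γ+1)‖FF (γ+1)‖ ≤ ∑_{antidiagonal γ} g
  have hFFle : ‖FF V mu (γ + 1)‖
      ≤ ∑ n ∈ Finset.range (γ + 1), ‖(((n : ℂ) + 1) + 2 * mu)⁻¹‖ * ‖V (n + 1) (γ + 1)‖ := by
    rw [FF, if_neg (Nat.succ_ne_zero γ)]
    refine le_trans (norm_sum_le _ _) (le_of_eq (Finset.sum_congr rfl fun n _ => norm_mul _ _))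
  have hsum_eq : ∑ p ∈ Finset.HasAntidiagonal.antidiagonal γ, g p
      = ∑ n ∈ Finset.range (γ + 1),
          C * (((n : ℝ) + 1)⁻¹ * ((γ : ℝ) + 1 + 1 - 1) * ‖V (n + 1) (γ + 1)‖) := by
    rw [Finset.Nat.sum_antidiagonal_eq_sum_range_succ_mk]
    refine Finset.sum_congr rfl fun n hn => ?_
    rw [Finset.mem_range] at hn
    have hnk : n + 1 + (γ - n) = γ + 1 := by omega
    rw [hg]
    simp only [hnk]
    push_cast
    ring
  rw [hsum_eq]
  calc ((γ : ℝ) + 1) * ‖FF V mu (γ + 1)‖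
      ≤ ((γ : ℝ) + 1) * ∑ n ∈ Finset.range (γ + 1),
          ‖(((n : ℂ) + 1) + 2 * mu)⁻¹‖ * ‖V (n + 1) (γ + 1)‖ :=
        mul_le_mul_of_nonneg_left hFFle (by positivity)
    _ = ∑ n ∈ Finset.range (γ + 1),
          ((γ : ℝ) + 1) * (‖(((n : ℂ) + 1) + 2 * mu)⁻¹‖ * ‖V (n + 1) (γ + 1)‖) := by
        rw [Finset.mul_sum]
    _ ≤ ∑ n ∈ Finset.range (γ + 1),
          C * (((n : ℝ) + 1)⁻¹ * ((γ : ℝ) + 1 + 1 - 1) * ‖V (n + 1) (γ + 1)‖) := by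
        refine Finset.sum_le_sum fun n _ => ?_
        have h1 := hCb n
        have h2 : (0:ℝ) ≤ ((γ : ℝ) + 1) * ‖V (n + 1) (γ + 1)‖ := by positivity
        calc ((γ : ℝ) + 1) * (‖(((n : ℂ) + 1) + 2 * mu)⁻¹‖ * ‖V (n + 1) (γ + 1)‖)
            = (((γ : ℝ) + 1) * ‖V (n + 1) (γ + 1)‖) * ‖(((n : ℂ) + 1) + 2 * mu)⁻¹‖ := by ring
          _ ≤ (((γ : ℝ) + 1) * ‖V (n + 1) (γ + 1)‖) * (C * ((n : ℝ) + 1)⁻¹) :=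
              mul_le_mul_of_nonneg_left h1 h2
          _ = C * (((n : ℝ) + 1)⁻¹ * ((γ : ℝ) + 1 + 1 - 1) * ‖V (n + 1) (γ + 1)‖) := by ring

lemma summable_FFnorm_succ (V : ℕ → ℕ → ℂ) (hC : Conv V) (mu : ℂ) :
    Summable fun γ : ℕ => ‖FF V mu (γ + 1)‖ := by
  refine Summable.of_nonneg_of_le (fun γ => norm_nonneg _) (fun γ => ?_) (summable_keyFF V hC mu)
  refine le_mul_of_one_le_left (norm_nonneg _) ?_
  have h : (0:ℝ) ≤ (γ:ℝ) := Nat.cast_nonneg γ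
  linarith

lemma summable_FFnorm (V : ℕ → ℕ → ℂ) (hC : Conv V) (mu : ℂ) :
    Summable fun γ : ℕ => ‖FF V mu γ‖ :=
  (summable_nat_add_iff 1).1 (summable_FFnorm_succ V hC mu)

lemma summable_FFmul (V : ℕ → ℕ → ℂ) (hC : Conv V) (mu : ℂ) :
    Summable fun γ : ℕ => (γ : ℝ) * ‖FF V mu γ‖ := by
  refine (summable_nat_add_iff 1).1 ?_
  refine (summable_keyFF V hC mu).congr fun γ => ?_
  push_cast
  ring

lemma norm_cexp_nat (γ : ℕ) (x : ℝ) : ‖Complex.exp (Complex.I * (γ : ℂ) * (x : ℂ))‖ = 1 := by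
  rw [Complex.norm_exp]
  have : (Complex.I * (γ : ℂ) * (x : ℂ)).re = 0 := by
    simp [Complex.mul_re, Complex.mul_im]
  rw [this, Real.exp_zero]

lemma summable_term (V : ℕ → ℕ → ℂ) (hC : Conv V) (mu : ℂ) (x : ℝ) :
    Summable fun γ : ℕ => FF V mu γ * Complex.exp (Complex.I * (γ : ℂ) * (x : ℂ)) := by
  refine Summable.of_norm ((summable_FFnorm V hC mu).congr fun γ => ?_)
  rw [norm_mul, norm_cexp_nat, mul_one]

lemma summable_term' (V : ℕ → ℕ → ℂ) (hC : Conv V) (mu : ℂ) (x : ℝ) :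
    Summable fun γ : ℕ =>
      (Complex.I * (γ : ℂ)) * (FF V mu γ * Complex.exp (Complex.I * (γ : ℂ) * (x : ℂ))) := by
  refine Summable.of_norm ((summable_FFmul V hC mu).congr fun γ => ?_)
  rw [norm_mul, norm_mul, norm_mul, Complex.norm_I, norm_cexp_nat, one_mul, mul_one,
    Complex.norm_natCast]

/-- The value of f₁ as a single Fourier series. -/
lemma Tval (V : ℕ → ℕ → ℂ) (hC : Conv V) (mu : ℂ) (x : ℝ) :
    f1 V mu (x : ℂ) = Complex.exp (Complex.I * mu * (x : ℂ)) *
      ∑' γ : ℕ, FF V mu γ * Complex.exp (Complex.I * (γ : ℂ) * (x : ℂ)) := by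
  obtain ⟨C, hC0, hCb⟩ := invBound mu
  set t : ℕ × ℕ → ℂ := fun p =>
    (((p.1 : ℂ) + 1) + 2 * mu)⁻¹ * V (p.1 + 1) (p.1 + 1 + p.2)
      * Complex.exp (Complex.I * (((p.1 + 1 + p.2 : ℕ)) : ℂ) * (x : ℂ)) with ht_def
  have ht : Summable t := by
    refine Summable.of_norm_bounded (g := fun p =>
      C * (((p.1 : ℝ) + 1)⁻¹ * (((p.1 + 1 + p.2 : ℕ)) : ℝ) * ‖V (p.1 + 1) (p.1 + 1 + p.2)‖))
      ?_ ?_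
    · have := (sumConv V hC).mul_left C
      exact this.congr fun p => by ring
    · intro p
      rw [ht_def]
      simp only []
      rw [norm_mul, norm_mul, norm_cexp_nat, mul_one]
      have h1 : (1 : ℝ) ≤ (((p.1 + 1 + p.2 : ℕ)) : ℝ) := by
        have : (1 : ℕ) ≤ p.1 + 1 + p.2 := by omega
        exact_mod_cast this
      calc ‖(((p.1 : ℂ) + 1) + 2 * mu)⁻¹‖ * ‖V (p.1 + 1) (p.1 + 1 + p.2)‖
          ≤ (C * ((p.1 : ℝ) + 1)⁻¹) * ‖V (p.1 + 1) (p.1 + 1 + p.2)‖ :=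
            mul_le_mul_of_nonneg_right (hCb p.1) (norm_nonneg _)
        _ = (C * (((p.1 : ℝ) + 1)⁻¹ * ‖V (p.1 + 1) (p.1 + 1 + p.2)‖)) * 1 := by ring
        _ ≤ (C * (((p.1 : ℝ) + 1)⁻¹ * ‖V (p.1 + 1) (p.1 + 1 + p.2)‖)) * (((p.1 + 1 + p.2 : ℕ)) : ℝ) := by
            exact mul_le_mul_of_nonneg_left h1
              (mul_nonneg hC0 (mul_nonneg (by positivity) (norm_nonneg _)))
        _ = C * (((p.1 : ℝ) + 1)⁻¹ * (((p.1 + 1 + p.2 : ℕ)) : ℝ) * ‖V (p.1 + 1) (p.1 + 1 + p.2)‖) := by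
            ring
  have hslice : ∀ n : ℕ, Summable fun k => t (n, k) := fun n => ht.prod_factor n
  rw [f1]
  congr 1
  -- inner sums
  have step1 : ∀ n : ℕ, (((n : ℂ) + 1) + 2 * mu)⁻¹ *
      ∑' k : ℕ, V (n + 1) (n + 1 + k)
        * Complex.exp (Complex.I * ((n : ℂ) + 1 + (k : ℂ)) * (x : ℂ))
      = ∑' k : ℕ, t (n, k) := by
    intro n
    rw [← tsum_mul_left]
    refine tsum_congr fun k => ?_
    rw [ht_def]
    simp only []
    push_cast
    ring
  rw [tsum_congr step1, ← Summable.tsum_prod' ht hslice]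
  -- regroup along antidiagonals
  have hsig : ∑' p : ℕ × ℕ, t p
      = ∑' γ : ℕ, FF V mu (γ + 1)
          * Complex.exp (Complex.I * (((γ + 1 : ℕ)) : ℂ) * (x : ℂ)) := by
    calc ∑' p : ℕ × ℕ, t p
        = ∑' σ : Σ γ : ℕ, (Finset.HasAntidiagonal.antidiagonal γ : Finset (ℕ × ℕ)),
            t ((Finset.HasAntidiagonal.sigmaAntidiagonalEquivProd (A := ℕ)) σ) :=
          ((Finset.HasAntidiagonal.sigmaAntidiagonalEquivProd (A := ℕ)).tsum_eq t).symm
      _ = ∑' γ : ℕ, ∑' c : (Finset.HasAntidiagonal.antidiagonal γ : Finset (ℕ × ℕ)),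
            t ((Finset.HasAntidiagonal.sigmaAntidiagonalEquivProd (A := ℕ)) ⟨γ, c⟩) :=
          Summable.tsum_sigma ((Equiv.summable_iff _).mpr ht)
      _ = ∑' γ : ℕ, FF V mu (γ + 1)
            * Complex.exp (Complex.I * (((γ + 1 : ℕ)) : ℂ) * (x : ℂ)) := by
          refine tsum_congr fun γ => ?_
          have h1 : ∑' c : (Finset.HasAntidiagonal.antidiagonal γ : Finset (ℕ × ℕ)),
              t ((Finset.HasAntidiagonal.sigmaAntidiagonalEquivProd (A := ℕ)) ⟨γ, c⟩)
              = ∑ p ∈ Finset.HasAntidiagonal.antidiagonal γ, t p := by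
            rw [← Finset.tsum_subtype]
            rfl
          rw [h1, Finset.Nat.sum_antidiagonal_eq_sum_range_succ_mk]
          have h2 : ∀ n ∈ Finset.range (γ + 1), t (n, γ - n)
              = ((((n : ℂ) + 1) + 2 * mu)⁻¹ * V (n + 1) (γ + 1))
                  * Complex.exp (Complex.I * (((γ + 1 : ℕ)) : ℂ) * (x : ℂ)) := by
            intro n hn
            rw [Finset.mem_range] at hn
            have hnk : n + 1 + (γ - n) = γ + 1 := by omega
            rw [ht_def]
            simp only [hnk]
          rw [Finset.sum_congr rfl h2, ← Finset.sum_mul]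
          rw [FF, if_neg (Nat.succ_ne_zero γ)]
  rw [hsig]
  -- add back the constant term
  have hsummable : Summable fun γ : ℕ =>
      FF V mu γ * Complex.exp (Complex.I * (γ : ℂ) * (x : ℂ)) := summable_term V hC mu x
  rw [Summable.tsum_eq_zero_add hsummable]
  have h0 : FF V mu 0 * Complex.exp (Complex.I * ((0 : ℕ) : ℂ) * (x : ℂ)) = 1 := by
    simp [FF]
  rw [h0]

lemma cexp_hasDeriv (c : ℂ) (y : ℝ) :
    HasDerivAt (fun t : ℝ => Complex.exp (c * (t : ℂ))) (c * Complex.exp (c * (y : ℂ))) y := by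
  have h1 : HasDerivAt (fun z : ℂ => Complex.exp (c * z)) (Complex.exp (c * (y : ℂ)) * c)
      ((y : ℝ) : ℂ) := by
    have h0 : HasDerivAt (fun z : ℂ => c * z) (c * 1) ((y : ℝ) : ℂ) :=
      (hasDerivAt_id _).const_mul c
    simpa using h0.cexp
  have := h1.comp_ofReal
  convert this using 1
  ring

lemma Tderiv (V : ℕ → ℕ → ℂ) (hC : Conv V) (mu : ℂ) (x : ℝ) :
    HasDerivAt
      (fun t : ℝ => ∑' γ : ℕ, FF V mu γ * Complex.exp (Complex.I * (γ : ℂ) * (t : ℂ)))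
      (∑' γ : ℕ, (Complex.I * (γ : ℂ))
        * (FF V mu γ * Complex.exp (Complex.I * (γ : ℂ) * (x : ℂ)))) x := by
  refine hasDerivAt_tsum (u := fun γ : ℕ => (γ : ℝ) * ‖FF V mu γ‖)
    (g := fun (γ : ℕ) (t : ℝ) => FF V mu γ * Complex.exp (Complex.I * (γ : ℂ) * (t : ℂ)))
    (y₀ := x) (g' := fun (γ : ℕ) (y : ℝ) => (Complex.I * (γ : ℂ))
      * (FF V mu γ * Complex.exp (Complex.I * (γ : ℂ) * (y : ℂ))))
    (summable_FFmul V hC mu) (fun γ y => ?_) (fun γ y => ?_) ?_ x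
  · have h := (cexp_hasDeriv (Complex.I * (γ : ℂ)) y).const_mul (FF V mu γ)
    exact h.congr_deriv (by ring)
  · rw [norm_mul, norm_mul, norm_mul, Complex.norm_I, norm_cexp_nat, one_mul, mul_one,
      Complex.norm_natCast]
  · exact summable_term V hC mu x

lemma f1deriv (V : ℕ → ℕ → ℂ) (hC : Conv V) (mu : ℂ) (x : ℝ) :
    HasDerivAt (fun t : ℝ => f1 V mu (t : ℂ))
      (Complex.exp (Complex.I * mu * (x : ℂ)) *
        ((Complex.I * mu) * (∑' γ : ℕ, FF V mu γ * Complex.exp (Complex.I * (γ : ℂ) * (x : ℂ)))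
          + ∑' γ : ℕ, (Complex.I * (γ : ℂ))
              * (FF V mu γ * Complex.exp (Complex.I * (γ : ℂ) * (x : ℂ))))) x := by
  have heq : (fun t : ℝ => f1 V mu (t : ℂ))
      = fun t : ℝ => Complex.exp (Complex.I * mu * (t : ℂ)) *
          ∑' γ : ℕ, FF V mu γ * Complex.exp (Complex.I * (γ : ℂ) * (t : ℂ)) :=
    funext fun t => Tval V hC mu t
  rw [heq]
  have hE : HasDerivAt (fun t : ℝ => Complex.exp (Complex.I * mu * (t : ℂ)))
      ((Complex.I * mu) * Complex.exp (Complex.I * mu * (x : ℂ))) x :=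
    cexp_hasDeriv (Complex.I * mu) x
  have h := hE.mul (Tderiv V hC mu x)
  exact h.congr_deriv (by ring)

theorem stmt5 (q : ℕ → ℂ) (V : ℕ → ℕ → ℂ)
    (hq : Summable fun n : ℕ => ‖q (n + 1)‖ ^ 2)
    (hR : Recur q V) (hC : Conv V)
    (lam : ℂ) (hlamp : ∀ n : ℕ, 1 ≤ n → (n : ℂ) + 2 * lam ≠ 0)
    (hlamm : ∀ n : ℕ, 1 ≤ n → (n : ℂ) - 2 * lam ≠ 0) :
    ∀ x : ℝ,
      deriv (fun t : ℝ => f1 V lam (t : ℂ)) x * f1 V (-lam) (x : ℂ)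
        - f1 V lam (x : ℂ) * deriv (fun t : ℝ => f1 V (-lam) (t : ℂ)) x
      = 2 * Complex.I * lam := by
  intro x
  have hT := (f1deriv V hC lam x).deriv
  have hS := (f1deriv V hC (-lam) x).deriv
  rw [hT, hS, Tval V hC lam x, Tval V hC (-lam) x]
  set F : ℕ → ℂ := FF V lam with hF
  set G : ℕ → ℂ := FF V (-lam) with hG
  set e : ℕ → ℂ := fun γ => Complex.exp (Complex.I * (γ : ℂ) * (x : ℂ)) with he
  have hEE : Complex.exp (Complex.I * lam * (x : ℂ))
      * Complex.exp (Complex.I * (-lam) * (x : ℂ)) = 1 := by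
    rw [← Complex.exp_add,
      show Complex.I * lam * (x : ℂ) + Complex.I * (-lam) * (x : ℂ) = 0 by ring,
      Complex.exp_zero]
  have hmain : ((Complex.I * lam) * (∑' γ : ℕ, F γ * e γ)
        + ∑' γ : ℕ, (Complex.I * (γ : ℂ)) * (F γ * e γ)) * (∑' γ : ℕ, G γ * e γ)
      - (∑' γ : ℕ, F γ * e γ) * ((Complex.I * (-lam)) * (∑' γ : ℕ, G γ * e γ)
        + ∑' γ : ℕ, (Complex.I * (γ : ℂ)) * (G γ * e γ))
      = 2 * Complex.I * lam := by
    have hFsn : Summable fun γ : ℕ => ‖F γ * e γ‖ := by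
      refine (summable_FFnorm V hC lam).congr fun γ => ?_
      rw [hF, he]; rw [norm_mul, norm_cexp_nat, mul_one]
    have hGsn : Summable fun γ : ℕ => ‖G γ * e γ‖ := by
      refine (summable_FFnorm V hC (-lam)).congr fun γ => ?_
      rw [hG, he]; rw [norm_mul, norm_cexp_nat, mul_one]
    have hF'sn : Summable fun γ : ℕ => ‖(Complex.I * (γ : ℂ)) * (F γ * e γ)‖ := by
      refine (summable_FFmul V hC lam).congr fun γ => ?_
      rw [hF, he, norm_mul, norm_mul, norm_mul, Complex.norm_I, norm_cexp_nat, one_mul,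
        mul_one, Complex.norm_natCast]
    have hG'sn : Summable fun γ : ℕ => ‖(Complex.I * (γ : ℂ)) * (G γ * e γ)‖ := by
      refine (summable_FFmul V hC (-lam)).congr fun γ => ?_
      rw [hG, he, norm_mul, norm_mul, norm_mul, Complex.norm_I, norm_cexp_nat, one_mul,
        mul_one, Complex.norm_natCast]
    have h1 : (∑' γ : ℕ, F γ * e γ) * (∑' γ : ℕ, G γ * e γ)
        = ∑' γ : ℕ, ∑ p ∈ Finset.HasAntidiagonal.antidiagonal γ, (F p.1 * e p.1) * (G p.2 * e p.2) :=
      tsum_mul_tsum_eq_tsum_sum_antidiagonal_of_summable_norm hFsn hGsn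
    have h2 : (∑' γ : ℕ, (Complex.I * (γ : ℂ)) * (F γ * e γ)) * (∑' γ : ℕ, G γ * e γ)
        = ∑' γ : ℕ, ∑ p ∈ Finset.HasAntidiagonal.antidiagonal γ,
            ((Complex.I * (p.1 : ℂ)) * (F p.1 * e p.1)) * (G p.2 * e p.2) :=
      tsum_mul_tsum_eq_tsum_sum_antidiagonal_of_summable_norm hF'sn hGsn
    have h3 : (∑' γ : ℕ, F γ * e γ) * (∑' γ : ℕ, (Complex.I * (γ : ℂ)) * (G γ * e γ))
        = ∑' γ : ℕ, ∑ p ∈ Finset.HasAntidiagonal.antidiagonal γ,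
            (F p.1 * e p.1) * ((Complex.I * (p.2 : ℂ)) * (G p.2 * e p.2)) :=
      tsum_mul_tsum_eq_tsum_sum_antidiagonal_of_summable_norm hFsn hG'sn
    have hc1 : Summable fun γ : ℕ =>
        ∑ p ∈ Finset.HasAntidiagonal.antidiagonal γ, (F p.1 * e p.1) * (G p.2 * e p.2) :=
      (summable_norm_sum_mul_antidiagonal_of_summable_norm hFsn hGsn).of_norm
    have hc2 : Summable fun γ : ℕ => ∑ p ∈ Finset.HasAntidiagonal.antidiagonal γ,
          ((Complex.I * (p.1 : ℂ)) * (F p.1 * e p.1)) * (G p.2 * e p.2) :=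
      (summable_norm_sum_mul_antidiagonal_of_summable_norm hF'sn hGsn).of_norm
    have hc3 : Summable fun γ : ℕ => ∑ p ∈ Finset.HasAntidiagonal.antidiagonal γ,
          (F p.1 * e p.1) * ((Complex.I * (p.2 : ℂ)) * (G p.2 * e p.2)) :=
      (summable_norm_sum_mul_antidiagonal_of_summable_norm hFsn hG'sn).of_norm
    calc ((Complex.I * lam) * (∑' γ : ℕ, F γ * e γ)
          + ∑' γ : ℕ, (Complex.I * (γ : ℂ)) * (F γ * e γ)) * (∑' γ : ℕ, G γ * e γ)
        - (∑' γ : ℕ, F γ * e γ) * ((Complex.I * (-lam)) * (∑' γ : ℕ, G γ * e γ)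
          + ∑' γ : ℕ, (Complex.I * (γ : ℂ)) * (G γ * e γ))
        = (2 * Complex.I * lam) * ((∑' γ : ℕ, F γ * e γ) * (∑' γ : ℕ, G γ * e γ))
          + ((∑' γ : ℕ, (Complex.I * (γ : ℂ)) * (F γ * e γ)) * (∑' γ : ℕ, G γ * e γ)
            - (∑' γ : ℕ, F γ * e γ) * (∑' γ : ℕ, (Complex.I * (γ : ℂ)) * (G γ * e γ))) := by
          ring
      _ = ∑' γ : ℕ, ((2 * Complex.I * lam)
              * (∑ p ∈ Finset.HasAntidiagonal.antidiagonal γ, (F p.1 * e p.1) * (G p.2 * e p.2))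
            + ((∑ p ∈ Finset.HasAntidiagonal.antidiagonal γ,
                ((Complex.I * (p.1 : ℂ)) * (F p.1 * e p.1)) * (G p.2 * e p.2))
              - ∑ p ∈ Finset.HasAntidiagonal.antidiagonal γ,
                (F p.1 * e p.1) * ((Complex.I * (p.2 : ℂ)) * (G p.2 * e p.2)))) := by
          rw [h1, h2, h3, ← tsum_mul_left, ← Summable.tsum_sub hc2 hc3,
            ← Summable.tsum_add (hc1.mul_left (2 * Complex.I * lam)) (hc2.sub hc3)]
      _ = ∑' γ : ℕ, (if γ = 0 then 2 * Complex.I * lam else 0) := by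
          refine tsum_congr fun γ => ?_
          have hexp : ∀ p ∈ Finset.HasAntidiagonal.antidiagonal γ, e p.1 * e p.2 = e γ := by
            intro p hp
            rw [Finset.HasAntidiagonal.mem_antidiagonal] at hp
            have hcast : (p.1 : ℂ) + (p.2 : ℂ) = (γ : ℂ) := by
              exact_mod_cast congrArg (Nat.cast : ℕ → ℂ) hp
            rw [he]
            simp only []
            rw [← Complex.exp_add]
            congr 1
            linear_combination (Complex.I * (x : ℂ)) * hcast
          have hterm : ∀ p ∈ Finset.HasAntidiagonal.antidiagonal γ,
              (2 * Complex.I * lam) * ((F p.1 * e p.1) * (G p.2 * e p.2))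
                + (((Complex.I * (p.1 : ℂ)) * (F p.1 * e p.1)) * (G p.2 * e p.2)
                  - (F p.1 * e p.1) * ((Complex.I * (p.2 : ℂ)) * (G p.2 * e p.2)))
              = ((2 * lam + (p.1 : ℂ) - (p.2 : ℂ)) * (F p.1 * G p.2))
                  * (Complex.I * e γ) := by
            intro p hp
            have h := hexp p hp
            linear_combination ((2 * lam + (p.1 : ℂ) - (p.2 : ℂ))
              * (F p.1 * G p.2) * Complex.I) * h
          rw [Finset.mul_sum, ← Finset.sum_sub_distrib, ← Finset.sum_add_distrib,
            Finset.sum_congr rfl hterm, ← Finset.sum_mul]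
          rcases Nat.eq_zero_or_pos γ with h0 | h1
          · subst h0
            rw [if_pos rfl]
            rw [Finset.Nat.antidiagonal_zero, Finset.sum_singleton]
            have hF0 : F 0 = 1 := by rw [hF, FF]; simp
            have hG0 : G 0 = 1 := by rw [hG, FF]; simp
            have he0 : e 0 = 1 := by rw [he]; simp
            rw [hF0, hG0, he0]
            push_cast
            ring
          · rw [if_neg (by omega), hF, hG,
              Dvanish q V hR lam hlamp hlamm γ h1, zero_mul]
      _ = 2 * Complex.I * lam := tsum_ite_eq (0 : ℕ) (fun _ => 2 * Complex.I * lam)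
  calc Complex.exp (Complex.I * lam * (x : ℂ)) *
        ((Complex.I * lam) * (∑' γ : ℕ, F γ * e γ)
          + ∑' γ : ℕ, (Complex.I * (γ : ℂ)) * (F γ * e γ))
        * (Complex.exp (Complex.I * (-lam) * (x : ℂ)) * (∑' γ : ℕ, G γ * e γ))
      - Complex.exp (Complex.I * lam * (x : ℂ)) * (∑' γ : ℕ, F γ * e γ)
        * (Complex.exp (Complex.I * (-lam) * (x : ℂ)) *
          ((Complex.I * (-lam)) * (∑' γ : ℕ, G γ * e γ)
            + ∑' γ : ℕ, (Complex.I * (γ : ℂ)) * (G γ * e γ)))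
      = (Complex.exp (Complex.I * lam * (x : ℂ))
          * Complex.exp (Complex.I * (-lam) * (x : ℂ)))
        * (((Complex.I * lam) * (∑' γ : ℕ, F γ * e γ)
            + ∑' γ : ℕ, (Complex.I * (γ : ℂ)) * (F γ * e γ)) * (∑' γ : ℕ, G γ * e γ)
          - (∑' γ : ℕ, F γ * e γ) * ((Complex.I * (-lam)) * (∑' γ : ℕ, G γ * e γ)
            + ∑' γ : ℕ, (Complex.I * (γ : ℂ)) * (G γ * e γ))) := by ring
    _ = 2 * Complex.I * lam := by rw [hEE, one_mul, hmain]
end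

section
/- Let λ ∈ ℂ with n − 2λβ ≠ 0 and n + 2λβ ≠ 0 for all integers n ≥ 1. Then for every x ∈ ℝ, the Wronskian f₂⁺(x,λ)·∂ₓf₂⁻(x,λ) − ∂ₓf₂⁺(x,λ)·f₂⁻(x,λ) equals 2iλβ. -/
open Complex MeasureTheory Filter Topology

namespace Stmt6Aux

open Complex Finset


/-- triangle swap over Icc -/
lemma icc_tri_swap (M : ℕ) (F : ℕ → ℕ → ℂ) :
    ∑ n ∈ Icc 1 M, ∑ s ∈ Icc n M, F n s = ∑ s ∈ Icc 1 M, ∑ n ∈ Icc 1 s, F n s := by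
  have h1 : ∀ n ∈ Icc 1 M, ∑ s ∈ Icc n M, F n s
      = ∑ s ∈ Icc 1 M, if n ≤ s then F n s else 0 := by
    intro n hn
    rw [← Finset.sum_filter]
    congr 1
    ext s
    simp only [Finset.mem_filter, Finset.mem_Icc] at *
    omega
  have h2 : ∀ s ∈ Icc 1 M, ∑ n ∈ Icc 1 s, F n s
      = ∑ n ∈ Icc 1 M, if n ≤ s then F n s else 0 := by
    intro s hs
    rw [← Finset.sum_filter]
    congr 1
    ext n
    simp only [Finset.mem_filter, Finset.mem_Icc] at *
    omega
  rw [Finset.sum_congr rfl h1, Finset.sum_congr rfl h2, Finset.sum_comm]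

/-- triangle swap over ranges -/
lemma range_tri_swap (m : ℕ) (F : ℕ → ℕ → ℂ) :
    ∑ i ∈ range (m+1), ∑ j ∈ range (m - i), F i j
      = ∑ i ∈ range (m+1), ∑ j ∈ range (m - i), F j i := by
  have h1 : ∀ i ∈ range (m+1), ∑ j ∈ range (m - i), F i j
      = ∑ j ∈ range (m+1), if i + j < m then F i j else 0 := by
    intro i hi
    rw [← Finset.sum_filter]
    congr 1
    ext j
    simp only [Finset.mem_filter, Finset.mem_range] at *
    omega
  have h2 : ∀ i ∈ range (m+1), ∑ j ∈ range (m - i), F j i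
      = ∑ j ∈ range (m+1), if j + i < m then F j i else 0 := by
    intro i hi
    rw [← Finset.sum_filter]
    congr 1
    ext j
    simp only [Finset.mem_filter, Finset.mem_range] at *
    omega
  rw [Finset.sum_congr rfl h1, Finset.sum_congr rfl h2, Finset.sum_comm]

noncomputable def coefA (V : ℕ → ℕ → ℂ) (ν : ℂ) (m : ℕ) : ℂ :=
  if m = 0 then 1 else ∑ n ∈ Icc 1 m, V n m * ((n : ℂ) - ν)⁻¹

lemma coefA_zero (V : ℕ → ℕ → ℂ) (ν : ℂ) : coefA V ν 0 = 1 := rfl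

lemma coefA_rec (q : ℕ → ℂ) (V : ℕ → ℕ → ℂ) (hR : Recur q V) (ν : ℂ)
    (hν : ∀ n : ℕ, 1 ≤ n → (n : ℂ) - ν ≠ 0) :
    ∀ m : ℕ, 1 ≤ m →
      (m : ℂ) * ((m : ℂ) - ν) * coefA V ν m
        + ∑ s ∈ range m, q (m - s) * coefA V ν s = 0 := by
  intro m hm
  have hm0 : m ≠ 0 := by omega
  -- expand coefA at m
  have e1 : (m : ℂ) * ((m : ℂ) - ν) * coefA V ν m
      = (∑ n ∈ Icc 1 m, ((m : ℂ) * ((m : ℂ) - (n : ℂ)) * V n m) * ((n : ℂ) - ν)⁻¹)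
        + (m : ℂ) * ∑ n ∈ Icc 1 m, V n m := by
    rw [coefA, if_neg hm0, Finset.mul_sum, Finset.mul_sum, ← Finset.sum_add_distrib]
    refine Finset.sum_congr rfl fun n hn => ?_
    have hn1 : 1 ≤ n := (Finset.mem_Icc.mp hn).1
    have h := hν n hn1
    field_simp
    ring
  -- the n = m term of the first sum vanishes
  have e2 : ∑ n ∈ Icc 1 m, ((m : ℂ) * ((m : ℂ) - (n : ℂ)) * V n m) * ((n : ℂ) - ν)⁻¹
      = ∑ n ∈ Icc 1 (m-1), ((m : ℂ) * ((m : ℂ) - (n : ℂ)) * V n m) * ((n : ℂ) - ν)⁻¹ := by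
    have : Icc 1 m = insert m (Icc 1 (m-1)) := by
      ext t; simp only [Finset.mem_insert, Finset.mem_Icc]; omega
    rw [this, Finset.sum_insert (by simp; omega)]
    simp
  -- use the recurrence (6)
  have e3 : ∑ n ∈ Icc 1 (m-1), ((m : ℂ) * ((m : ℂ) - (n : ℂ)) * V n m) * ((n : ℂ) - ν)⁻¹
      = ∑ n ∈ Icc 1 (m-1), (-(∑ s ∈ Icc n (m-1), q (m - s) * V n s)) * ((n : ℂ) - ν)⁻¹ := by
    refine Finset.sum_congr rfl fun n hn => ?_
    have hn' := Finset.mem_Icc.mp hn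
    have h6 := hR.1 n m hn'.1 (by omega)
    congr 1
    linear_combination h6
  -- swap the double sum
  have e4 : ∑ n ∈ Icc 1 (m-1), (-(∑ s ∈ Icc n (m-1), q (m - s) * V n s)) * ((n : ℂ) - ν)⁻¹
      = -∑ s ∈ Icc 1 (m-1), q (m - s) * coefA V ν s := by
    have : ∑ n ∈ Icc 1 (m-1), (-(∑ s ∈ Icc n (m-1), q (m - s) * V n s)) * ((n : ℂ) - ν)⁻¹
        = -∑ n ∈ Icc 1 (m-1), ∑ s ∈ Icc n (m-1), q (m - s) * (V n s * ((n : ℂ) - ν)⁻¹) := by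
      rw [← Finset.sum_neg_distrib]
      refine Finset.sum_congr rfl fun n hn => ?_
      rw [neg_mul, Finset.sum_mul]
      congr 1
      refine Finset.sum_congr rfl fun s hs => by ring
    rw [this, icc_tri_swap]
    congr 1
    refine Finset.sum_congr rfl fun s hs => ?_
    have hs1 : 1 ≤ s := (Finset.mem_Icc.mp hs).1
    rw [coefA, if_neg (by omega), Finset.mul_sum]
  -- use (7)
  have e5 : (m : ℂ) * ∑ n ∈ Icc 1 m, V n m = - q m := by
    have h7 := hR.2 m hm
    linear_combination h7
  -- split the range sum
  have e6 : ∑ s ∈ range m, q (m - s) * coefA V ν s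
      = q m + ∑ s ∈ Icc 1 (m-1), q (m - s) * coefA V ν s := by
    have hins : range m = insert 0 (Icc 1 (m-1)) := by
      ext t; simp only [Finset.mem_insert, Finset.mem_Icc, Finset.mem_range]; omega
    rw [hins, Finset.sum_insert (by simp), Nat.sub_zero, coefA_zero, mul_one]
  rw [e1, e2, e3, e4, e5, e6]
  ring


lemma w_zero (q : ℕ → ℂ) (V : ℕ → ℕ → ℂ) (hR : Recur q V) (μ : ℂ)
    (hmm : ∀ n : ℕ, 1 ≤ n → (n : ℂ) - μ ≠ 0)
    (hpp : ∀ n : ℕ, 1 ≤ n → (n : ℂ) + μ ≠ 0) :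
    ∀ m : ℕ, 1 ≤ m →
      ∑ p ∈ Finset.HasAntidiagonal.antidiagonal m,
        (μ + (m : ℂ) - 2 * (p.1 : ℂ)) * coefA V μ p.1 * coefA V (-μ) p.2 = 0 := by
  intro m hm
  have Ra : ∀ α : ℕ, (α : ℂ) * ((α : ℂ) - μ) * coefA V μ α
      + ∑ s ∈ range α, q (α - s) * coefA V μ s = 0 := by
    intro α
    rcases Nat.eq_zero_or_pos α with h | h
    · subst h; simp
    · exact coefA_rec q V hR μ hmm α h
  have Rb : ∀ γ : ℕ, (γ : ℂ) * ((γ : ℂ) + μ) * coefA V (-μ) γ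
      + ∑ s ∈ range γ, q (γ - s) * coefA V (-μ) s = 0 := by
    intro γ
    rcases Nat.eq_zero_or_pos γ with h | h
    · subst h; simp
    · have := coefA_rec q V hR (-μ) (fun n hn => by
        rw [sub_neg_eq_add]; exact hpp n hn) γ h
      rwa [sub_neg_eq_add] at this
  have hmne : (m : ℂ) ≠ 0 := Nat.cast_ne_zero.mpr (by omega)
  suffices h : (m : ℂ) * ∑ p ∈ Finset.HasAntidiagonal.antidiagonal m,
      (μ + (m : ℂ) - 2 * (p.1 : ℂ)) * coefA V μ p.1 * coefA V (-μ) p.2 = 0 by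
    rcases mul_eq_zero.mp h with h' | h'
    · exact absurd h' hmne
    · exact h'
  rw [Finset.mul_sum]
  have key : ∀ p ∈ Finset.HasAntidiagonal.antidiagonal m,
      (m : ℂ) * ((μ + (m : ℂ) - 2 * (p.1 : ℂ)) * coefA V μ p.1 * coefA V (-μ) p.2)
      = (-(∑ s ∈ range p.2, q (p.2 - s) * coefA V (-μ) s)) * coefA V μ p.1
        - (-(∑ s ∈ range p.1, q (p.1 - s) * coefA V μ s)) * coefA V (-μ) p.2 := by
    rintro ⟨α, γ⟩ hp
    have hpm : α + γ = m := Finset.HasAntidiagonal.mem_antidiagonal.mp hp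
    subst hpm
    have ha := Ra α
    have hb := Rb γ
    push_cast
    linear_combination coefA V μ α * hb - coefA V (-μ) γ * ha
  rw [Finset.sum_congr rfl key, Finset.sum_sub_distrib]
  rw [Finset.Nat.sum_antidiagonal_eq_sum_range_succ_mk, Finset.Nat.sum_antidiagonal_eq_sum_range_succ_mk]
  -- second sum : reflect
  have refl2 : ∑ k ∈ range (m+1), (-(∑ s ∈ range k, q (k - s) * coefA V μ s)) * coefA V (-μ) (m - k)
      = ∑ k ∈ range (m+1), (-(∑ s ∈ range (m - k), q ((m - k) - s) * coefA V μ s)) * coefA V (-μ) k := by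
    rw [← Finset.sum_range_reflect]
    refine Finset.sum_congr rfl fun k hk => ?_
    have hk' : k ≤ m := by
      have := Finset.mem_range.mp hk; omega
    have h1 : m + 1 - 1 - k = m - k := by omega
    have h2 : m - (m - k) = k := Nat.sub_sub_self hk'
    rw [h1, h2]
  rw [refl2]
  -- first sum : triangle swap
  have tri : ∑ k ∈ range (m+1), (-(∑ s ∈ range (m - k), q ((m - k) - s) * coefA V (-μ) s)) * coefA V μ k
      = ∑ k ∈ range (m+1), (-(∑ s ∈ range (m - k), q ((m - k) - s) * coefA V μ s)) * coefA V (-μ) k := by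
    have lhs_eq : ∀ k, (-(∑ s ∈ range (m - k), q ((m - k) - s) * coefA V (-μ) s)) * coefA V μ k
        = ∑ s ∈ range (m - k), -(q (m - k - s) * coefA V (-μ) s * coefA V μ k) := by
      intro k
      rw [neg_mul, Finset.sum_mul, ← Finset.sum_neg_distrib]
    have rhs_eq : ∀ k, (-(∑ s ∈ range (m - k), q ((m - k) - s) * coefA V μ s)) * coefA V (-μ) k
        = ∑ s ∈ range (m - k), -(q (m - k - s) * coefA V μ s * coefA V (-μ) k) := by
      intro k
      rw [neg_mul, Finset.sum_mul, ← Finset.sum_neg_distrib]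
    simp only [lhs_eq, rhs_eq]
    rw [range_tri_swap m (fun i j => -(q (m - i - j) * coefA V (-μ) j * coefA V μ i))]
    refine Finset.sum_congr rfl fun k _ => Finset.sum_congr rfl fun s _ => ?_
    rw [show m - s - k = m - k - s from by omega]
    ring
  rw [tri, sub_self]



/-! ### Analytic helpers -/

lemma norm_exp_I_nat_mul (c : ℝ) (x : ℝ) :
    ‖Complex.exp (Complex.I * (c : ℂ) * (x : ℂ))‖ = 1 := by
  have h : (Complex.I * (c : ℂ) * (x : ℂ)).re = 0 := by simp
  rw [Complex.norm_exp, h, Real.exp_zero]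

lemma inv_bound (ν : ℂ) (hν : ∀ n : ℕ, 1 ≤ n → (n : ℂ) - ν ≠ 0) :
    ∃ C : ℝ, 0 < C ∧ ∀ n : ℕ, ‖(((n : ℂ) + 1) - ν)⁻¹‖ ≤ C * ((n : ℝ) + 1)⁻¹ := by
  set N : ℕ := Nat.ceil (2 * ‖ν‖) with hN
  set C : ℝ := 2 + ∑ j ∈ range N, ((j : ℝ) + 1) * ‖(((j : ℂ) + 1) - ν)⁻¹‖ with hC
  have hsumnn : (0:ℝ) ≤ ∑ j ∈ range N, ((j : ℝ) + 1) * ‖(((j : ℂ) + 1) - ν)⁻¹‖ :=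
    Finset.sum_nonneg fun j _ => by positivity
  have hC2 : (2:ℝ) ≤ C := by rw [hC]; linarith
  have hC0 : (0:ℝ) < C := by linarith
  refine ⟨C, hC0, fun n => ?_⟩
  have hn1 : (0:ℝ) < (n : ℝ) + 1 := by positivity
  rw [mul_comm C, inv_mul_eq_div, le_div_iff₀ hn1]
  by_cases hcase : n < N
  · have hterm : ((n : ℝ) + 1) * ‖(((n : ℂ) + 1) - ν)⁻¹‖
        ≤ ∑ j ∈ range N, ((j : ℝ) + 1) * ‖(((j : ℂ) + 1) - ν)⁻¹‖ :=
      Finset.single_le_sum (f := fun j : ℕ => ((j : ℝ) + 1) * ‖(((j : ℂ) + 1) - ν)⁻¹‖)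
        (fun j _ => by positivity) (Finset.mem_range.mpr hcase)
    calc ‖(((n : ℂ) + 1) - ν)⁻¹‖ * ((n : ℝ) + 1)
        = ((n : ℝ) + 1) * ‖(((n : ℂ) + 1) - ν)⁻¹‖ := by ring
      _ ≤ ∑ j ∈ range N, ((j : ℝ) + 1) * ‖(((j : ℂ) + 1) - ν)⁻¹‖ := hterm
      _ ≤ C := by rw [hC]; linarith
  · push_neg at hcase
    have h2ν : 2 * ‖ν‖ ≤ (n : ℝ) + 1 := by
      have := Nat.le_ceil (2 * ‖ν‖)
      have hNn : (N : ℝ) ≤ (n : ℝ) := by exact_mod_cast hcase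
      linarith
    have hnormval : ‖((n : ℂ) + 1)‖ = (n : ℝ) + 1 := by
      have : ((n : ℂ) + 1) = (((n : ℝ) + 1 : ℝ) : ℂ) := by push_cast; ring
      rw [this, Complex.norm_real, Real.norm_of_nonneg (by positivity)]
    have hlow : ((n : ℝ) + 1) / 2 ≤ ‖(((n : ℂ) + 1) - ν)‖ := by
      have h1 : ‖((n : ℂ) + 1)‖ - ‖ν‖ ≤ ‖(((n : ℂ) + 1) - ν)‖ :=
        norm_sub_norm_le _ _
      rw [hnormval] at h1
      linarith
    have hpos : (0:ℝ) < ((n : ℝ) + 1) / 2 := by positivity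
    have hipos : (0:ℝ) < ‖(((n : ℂ) + 1) - ν)‖ := lt_of_lt_of_le hpos hlow
    have : ‖(((n : ℂ) + 1) - ν)⁻¹‖ ≤ (((n : ℝ) + 1) / 2)⁻¹ := by
      rw [norm_inv]
      exact inv_anti₀ hpos hlow
    calc ‖(((n : ℂ) + 1) - ν)⁻¹‖ * ((n : ℝ) + 1)
        ≤ (((n : ℝ) + 1) / 2)⁻¹ * ((n : ℝ) + 1) := by
          exact mul_le_mul_of_nonneg_right this (le_of_lt hn1)
      _ = 2 := by field_simp
      _ ≤ C := hC2

lemma tsum_antidiag (F : ℕ × ℕ → ℂ) (h : Summable F) :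
    ∑' p : ℕ × ℕ, F p = ∑' n : ℕ, ∑ p ∈ Finset.HasAntidiagonal.antidiagonal n, F p := by
  rw [tsum_congr (fun n => (Finset.tsum_subtype (Finset.HasAntidiagonal.antidiagonal n) F).symm)]
  rw [← Finset.HasAntidiagonal.sigmaAntidiagonalEquivProd.tsum_eq F]
  exact Summable.tsum_sigma' (fun n => (hasSum_fintype _).summable)
    (Finset.HasAntidiagonal.sigmaAntidiagonalEquivProd.summable_iff.mpr h)

lemma summable_antidiag_real (F : ℕ × ℕ → ℝ) (h : Summable F) :
    Summable fun n => ∑ p ∈ Finset.HasAntidiagonal.antidiagonal n, F p := by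
  have heq : (fun n => ∑ p ∈ Finset.HasAntidiagonal.antidiagonal n, F p)
      = fun n => ∑' (p : (Finset.HasAntidiagonal.antidiagonal n : Finset (ℕ × ℕ))), F p := by
    funext n
    exact (Finset.tsum_subtype (Finset.HasAntidiagonal.antidiagonal n) F).symm
  rw [heq]
  exact (Finset.HasAntidiagonal.sigmaAntidiagonalEquivProd.summable_iff.mpr h).sigma'
    (fun n => (hasSum_fintype _).summable)

lemma master_summable (V : ℕ → ℕ → ℂ) (hC : Conv V) :
    Summable (fun p : ℕ × ℕ =>
      ((p.1 : ℝ) + 1)⁻¹ * (((p.1 + 1 + p.2 : ℕ) : ℝ) * ‖V (p.1 + 1) (p.1 + 1 + p.2)‖)) := by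
  have h1 : ∀ n : ℕ, Summable fun k =>
      ((n : ℝ) + 1)⁻¹ * (((n + 1 + k : ℕ) : ℝ) * ‖V (n + 1) (n + 1 + k)‖) :=
    fun n => (hC.1 (n + 1) (by omega)).mul_left _
  have h2 : Summable fun n : ℕ =>
      ∑' k : ℕ, ((n : ℝ) + 1)⁻¹ * (((n + 1 + k : ℕ) : ℝ) * ‖V (n + 1) (n + 1 + k)‖) := by
    simp_rw [tsum_mul_left]
    exact hC.2
  exact (summable_prod_of_nonneg (fun p => by positivity)).mpr ⟨h1, h2⟩

lemma pair_summable (V : ℕ → ℕ → ℂ) (hC : Conv V) (ν : ℂ)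
    (hν : ∀ n : ℕ, 1 ≤ n → (n : ℂ) - ν ≠ 0) :
    Summable (fun p : ℕ × ℕ =>
      (((p.1 + 1 + p.2 : ℕ)) : ℝ) * ‖(((p.1 : ℂ) + 1) - ν)⁻¹ * V (p.1 + 1) (p.1 + 1 + p.2)‖) := by
  obtain ⟨C, hC0, hCb⟩ := inv_bound ν hν
  refine Summable.of_nonneg_of_le (fun p => by positivity) (fun p => ?_)
    ((master_summable V hC).mul_left C)
  rw [norm_mul]
  have h1 := hCb p.1
  have h2 : (0:ℝ) ≤ ((p.1 + 1 + p.2 : ℕ) : ℝ) := by positivity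
  have h3 : (0:ℝ) ≤ ‖V (p.1 + 1) (p.1 + 1 + p.2)‖ := norm_nonneg _
  calc ((p.1 + 1 + p.2 : ℕ) : ℝ) * (‖(((p.1 : ℂ) + 1) - ν)⁻¹‖ * ‖V (p.1 + 1) (p.1 + 1 + p.2)‖)
      ≤ ((p.1 + 1 + p.2 : ℕ) : ℝ) * ((C * ((p.1 : ℝ) + 1)⁻¹) * ‖V (p.1 + 1) (p.1 + 1 + p.2)‖) := by
        apply mul_le_mul_of_nonneg_left (mul_le_mul_of_nonneg_right h1 h3) h2
    _ = C * (((p.1 : ℝ) + 1)⁻¹ * (((p.1 + 1 + p.2 : ℕ) : ℝ) * ‖V (p.1 + 1) (p.1 + 1 + p.2)‖)) := by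
        ring

lemma coefA_succ (V : ℕ → ℕ → ℂ) (ν : ℂ) (m : ℕ) :
    coefA V ν (m + 1) = ∑ n ∈ range (m + 1), V (n + 1) (m + 1) * (((n : ℂ) + 1) - ν)⁻¹ := by
  rw [coefA, if_neg (Nat.succ_ne_zero m), ← Finset.Ico_add_one_right_eq_Icc,
    Finset.sum_Ico_eq_sum_range]
  refine Finset.sum_congr (by norm_num) fun n _ => ?_
  have h1 : 1 + n = n + 1 := by omega
  rw [h1]
  push_cast
  ring_nf

noncomputable def Gp (V : ℕ → ℕ → ℂ) (ν : ℂ) (x : ℝ) (p : ℕ × ℕ) : ℂ :=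
  (((p.1 : ℂ) + 1) - ν)⁻¹ * V (p.1 + 1) (p.1 + 1 + p.2) *
    Complex.exp (Complex.I * ((p.1 : ℂ) + 1 + (p.2 : ℂ)) * (x : ℂ))

lemma norm_Gp (V : ℕ → ℕ → ℂ) (ν : ℂ) (x : ℝ) (p : ℕ × ℕ) :
    ‖Gp V ν x p‖ = ‖(((p.1 : ℂ) + 1) - ν)⁻¹ * V (p.1 + 1) (p.1 + 1 + p.2)‖ := by
  have hc : ((p.1 : ℂ) + 1 + (p.2 : ℂ)) = (((p.1 + 1 + p.2 : ℕ) : ℝ) : ℂ) := by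
    push_cast; ring
  rw [Gp, norm_mul, hc, norm_exp_I_nat_mul, mul_one]

lemma summable_norm_Gp (V : ℕ → ℕ → ℂ) (hC : Conv V) (ν : ℂ)
    (hν : ∀ n : ℕ, 1 ≤ n → (n : ℂ) - ν ≠ 0) (x : ℝ) :
    Summable fun p : ℕ × ℕ => ‖Gp V ν x p‖ := by
  refine Summable.of_nonneg_of_le (fun p => norm_nonneg _) (fun p => ?_)
    (pair_summable V hC ν hν)
  rw [norm_Gp]
  refine le_mul_of_one_le_left (norm_nonneg _) ?_
  have : (1 : ℕ) ≤ p.1 + 1 + p.2 := by omega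
  exact_mod_cast this

lemma summable_Gp (V : ℕ → ℕ → ℂ) (hC : Conv V) (ν : ℂ)
    (hν : ∀ n : ℕ, 1 ≤ n → (n : ℂ) - ν ≠ 0) (x : ℝ) :
    Summable fun p : ℕ × ℕ => Gp V ν x p :=
  (summable_norm_Gp V hC ν hν x).of_norm

lemma antidiag_Gp (V : ℕ → ℕ → ℂ) (ν : ℂ) (x : ℝ) (m : ℕ) :
    ∑ p ∈ Finset.HasAntidiagonal.antidiagonal m, Gp V ν x p
      = coefA V ν (m + 1) * Complex.exp (Complex.I * ((m : ℂ) + 1) * (x : ℂ)) := by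
  rw [Finset.Nat.sum_antidiagonal_eq_sum_range_succ_mk, coefA_succ, Finset.sum_mul]
  refine Finset.sum_congr rfl fun n hn => ?_
  have hnm : n ≤ m := by have := Finset.mem_range.mp hn; omega
  have h1 : n + 1 + (m - n) = m + 1 := by omega
  have h2 : ((n : ℂ) + 1 + ((m - n : ℕ) : ℂ)) = (m : ℂ) + 1 := by
    rw [Nat.cast_sub hnm]; ring
  rw [Gp]
  simp only [h1, h2]
  ring

lemma summable_coef_weight (V : ℕ → ℕ → ℂ) (hC : Conv V) (ν : ℂ)
    (hν : ∀ n : ℕ, 1 ≤ n → (n : ℂ) - ν ≠ 0) :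
    Summable fun m : ℕ => ((m : ℝ) + 1) * ‖coefA V ν (m + 1)‖ := by
  have hgrp := summable_antidiag_real _ (pair_summable V hC ν hν)
  refine Summable.of_nonneg_of_le (fun m => by positivity) (fun m => ?_) hgrp
  have h1 : ∑ p ∈ Finset.HasAntidiagonal.antidiagonal m,
        ((p.1 + 1 + p.2 : ℕ) : ℝ) * ‖(((p.1 : ℂ) + 1) - ν)⁻¹ * V (p.1 + 1) (p.1 + 1 + p.2)‖
      = ((m : ℝ) + 1) * ∑ n ∈ range (m + 1), ‖(((n : ℂ) + 1) - ν)⁻¹ * V (n + 1) (m + 1)‖ := by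
    rw [Finset.Nat.sum_antidiagonal_eq_sum_range_succ_mk, Finset.mul_sum]
    refine Finset.sum_congr rfl fun n hn => ?_
    have hnm : n ≤ m := by have := Finset.mem_range.mp hn; omega
    rw [show n + 1 + (m - n) = m + 1 from by omega]
    congr 1
    push_cast
    ring
  rw [h1]
  refine mul_le_mul_of_nonneg_left ?_ (by positivity)
  calc ‖coefA V ν (m + 1)‖
      = ‖∑ n ∈ range (m + 1), V (n + 1) (m + 1) * (((n : ℂ) + 1) - ν)⁻¹‖ := by
        rw [coefA_succ]
    _ ≤ ∑ n ∈ range (m + 1), ‖V (n + 1) (m + 1) * (((n : ℂ) + 1) - ν)⁻¹‖ :=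
        norm_sum_le _ _
    _ = ∑ n ∈ range (m + 1), ‖(((n : ℂ) + 1) - ν)⁻¹ * V (n + 1) (m + 1)‖ := by
        refine Finset.sum_congr rfl fun n _ => ?_
        rw [mul_comm]

lemma summable_coef (V : ℕ → ℕ → ℂ) (hC : Conv V) (ν : ℂ)
    (hν : ∀ n : ℕ, 1 ≤ n → (n : ℂ) - ν ≠ 0) :
    Summable fun m : ℕ => ‖coefA V ν m‖ := by
  have h' : Summable fun m : ℕ => ‖coefA V ν (m + 1)‖ := by
    refine Summable.of_nonneg_of_le (fun m => norm_nonneg _) (fun m => ?_)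
      (summable_coef_weight V hC ν hν)
    refine le_mul_of_one_le_left (norm_nonneg _) ?_
    have : (0:ℝ) ≤ (m : ℝ) := Nat.cast_nonneg m
    linarith
  exact (summable_nat_add_iff 1).mp h'

lemma summable_coef_mul (V : ℕ → ℕ → ℂ) (hC : Conv V) (ν : ℂ)
    (hν : ∀ n : ℕ, 1 ≤ n → (n : ℂ) - ν ≠ 0) :
    Summable fun m : ℕ => (m : ℝ) * ‖coefA V ν m‖ := by
  apply (summable_nat_add_iff 1).mp
  have : (fun m : ℕ => ((m + 1 : ℕ) : ℝ) * ‖coefA V ν (m + 1)‖)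
      = fun m : ℕ => ((m : ℝ) + 1) * ‖coefA V ν (m + 1)‖ := by
    funext m; push_cast; ring
  exact this ▸ summable_coef_weight V hC ν hν

lemma norm_P (V : ℕ → ℕ → ℂ) (ν : ℂ) (x : ℝ) (m : ℕ) :
    ‖coefA V ν m * Complex.exp (Complex.I * (m : ℂ) * (x : ℂ))‖ = ‖coefA V ν m‖ := by
  have hc : ((m : ℕ) : ℂ) = (((m : ℕ) : ℝ) : ℂ) := by push_cast; ring
  rw [norm_mul, hc, norm_exp_I_nat_mul, mul_one]

lemma summable_P (V : ℕ → ℕ → ℂ) (hC : Conv V) (ν : ℂ)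
    (hν : ∀ n : ℕ, 1 ≤ n → (n : ℂ) - ν ≠ 0) (x : ℝ) :
    Summable fun m : ℕ => coefA V ν m * Complex.exp (Complex.I * (m : ℂ) * (x : ℂ)) := by
  apply Summable.of_norm
  exact (summable_congr fun m => norm_P V ν x m).mpr (summable_coef V hC ν hν)

lemma summable_Q (V : ℕ → ℕ → ℂ) (hC : Conv V) (ν : ℂ)
    (hν : ∀ n : ℕ, 1 ≤ n → (n : ℂ) - ν ≠ 0) (x : ℝ) :
    Summable fun m : ℕ =>
      coefA V ν m * (Complex.I * (m : ℂ)) * Complex.exp (Complex.I * (m : ℂ) * (x : ℂ)) := by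
  apply Summable.of_norm
  have h : ∀ m : ℕ, ‖coefA V ν m * (Complex.I * (m : ℂ))
        * Complex.exp (Complex.I * (m : ℂ) * (x : ℂ))‖ = (m : ℝ) * ‖coefA V ν m‖ := by
    intro m
    have hc : ((m : ℕ) : ℂ) = (((m : ℕ) : ℝ) : ℂ) := by push_cast; ring
    rw [norm_mul, norm_mul, norm_mul, Complex.norm_I, one_mul, hc, norm_exp_I_nat_mul,
      mul_one, Complex.norm_real, Real.norm_of_nonneg (Nat.cast_nonneg m)]
    ring
  exact (summable_congr h).mpr (summable_coef_mul V hC ν hν)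

lemma inner_eq (V : ℕ → ℕ → ℂ) (hC : Conv V) (ν : ℂ)
    (hν : ∀ n : ℕ, 1 ≤ n → (n : ℂ) - ν ≠ 0) (x : ℝ) :
    ∑' n : ℕ, (((n : ℂ) + 1) - ν)⁻¹ * ∑' k : ℕ, V (n + 1) (n + 1 + k) *
        Complex.exp (Complex.I * ((n : ℂ) + 1 + (k : ℂ)) * (x : ℂ))
      = ∑' m : ℕ, coefA V ν (m + 1)
          * Complex.exp (Complex.I * ((m : ℂ) + 1) * (x : ℂ)) := by
  have hsum := summable_Gp V hC ν hν x
  have h1 : ∀ n : ℕ, (((n : ℂ) + 1) - ν)⁻¹ * ∑' k : ℕ, V (n + 1) (n + 1 + k) *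
        Complex.exp (Complex.I * ((n : ℂ) + 1 + (k : ℂ)) * (x : ℂ))
      = ∑' k : ℕ, Gp V ν x (n, k) := by
    intro n
    rw [← tsum_mul_left]
    exact tsum_congr fun k => by rw [Gp]; ring
  have hfib : ∀ n : ℕ, Summable fun k : ℕ => Gp V ν x (n, k) := by
    intro n
    have hinj : Function.Injective (fun k : ℕ => ((n, k) : ℕ × ℕ)) := by
      intro a b hab
      simpa using congrArg Prod.snd hab
    exact hsum.comp_injective hinj
  rw [tsum_congr h1, ← hsum.tsum_prod' hfib, tsum_antidiag _ hsum]
  exact tsum_congr fun m => antidiag_Gp V ν x m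

lemma tsum_repr (V : ℕ → ℕ → ℂ) (hC : Conv V) (ν : ℂ)
    (hν : ∀ n : ℕ, 1 ≤ n → (n : ℂ) - ν ≠ 0) (x : ℝ) :
    1 + ∑' n : ℕ, (((n : ℂ) + 1) - ν)⁻¹ * ∑' k : ℕ, V (n + 1) (n + 1 + k) *
        Complex.exp (Complex.I * ((n : ℂ) + 1 + (k : ℂ)) * (x : ℂ))
      = ∑' m : ℕ, coefA V ν m * Complex.exp (Complex.I * (m : ℂ) * (x : ℂ)) := by
  rw [inner_eq V hC ν hν x, (summable_P V hC ν hν x).tsum_eq_zero_add]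
  congr 1
  · simp [coefA_zero]
  · refine tsum_congr fun m => ?_
    congr 2
    push_cast
    ring

lemma f2_repr (V : ℕ → ℕ → ℂ) (hC : Conv V) (β : ℝ) (lam' : ℂ)
    (hν : ∀ n : ℕ, 1 ≤ n → (n : ℂ) - 2 * lam' * (β : ℂ) ≠ 0) (t : ℝ) :
    f2 V β lam' (t : ℂ) = Complex.exp (-Complex.I * lam' * (β : ℂ) * (t : ℂ)) *
      ∑' m : ℕ, coefA V (2 * lam' * (β : ℂ)) m
        * Complex.exp (Complex.I * (m : ℂ) * (t : ℂ)) := by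
  rw [f2, tsum_repr V hC (2 * lam' * (β : ℂ)) hν t]

lemma exp_hasDerivAt (c : ℂ) (x : ℝ) :
    HasDerivAt (fun t : ℝ => Complex.exp (c * (t : ℂ)))
      (c * Complex.exp (c * (x : ℂ))) x := by
  have h1 : HasDerivAt (fun z : ℂ => c * z) c (x : ℂ) := by
    simpa using (hasDerivAt_id ((x : ℝ) : ℂ)).const_mul c
  have h2 := h1.cexp
  have h3 := h2.comp_ofReal
  convert h3 using 1
  ring

lemma P_hasDerivAt (V : ℕ → ℕ → ℂ) (hC : Conv V) (ν : ℂ)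
    (hν : ∀ n : ℕ, 1 ≤ n → (n : ℂ) - ν ≠ 0) (x : ℝ) :
    HasDerivAt (fun t : ℝ => ∑' m : ℕ, coefA V ν m
        * Complex.exp (Complex.I * (m : ℂ) * (t : ℂ)))
      (∑' m : ℕ, coefA V ν m * (Complex.I * (m : ℂ))
        * Complex.exp (Complex.I * (m : ℂ) * (x : ℂ))) x := by
  have hg : ∀ (m : ℕ) (y : ℝ), HasDerivAt
      (fun t : ℝ => coefA V ν m * Complex.exp (Complex.I * (m : ℂ) * (t : ℂ)))
      (coefA V ν m * (Complex.I * (m : ℂ))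
        * Complex.exp (Complex.I * (m : ℂ) * (y : ℂ))) y := by
    intro m y
    have h := (exp_hasDerivAt (Complex.I * (m : ℂ)) y).const_mul (coefA V ν m)
    exact h.congr_deriv (by ring)
  have hg' : ∀ (m : ℕ) (y : ℝ), ‖coefA V ν m * (Complex.I * (m : ℂ))
      * Complex.exp (Complex.I * (m : ℂ) * (y : ℂ))‖ ≤ (m : ℝ) * ‖coefA V ν m‖ := by
    intro m y
    have hc : ((m : ℕ) : ℂ) = (((m : ℕ) : ℝ) : ℂ) := by push_cast; ring
    rw [norm_mul, norm_mul, norm_mul, Complex.norm_I, one_mul, hc, norm_exp_I_nat_mul,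
      mul_one, Complex.norm_real, Real.norm_of_nonneg (Nat.cast_nonneg m)]
    exact le_of_eq (by ring)
  exact hasDerivAt_tsum (summable_coef_mul V hC ν hν) hg hg' (summable_P V hC ν hν x) x

lemma f2_hasDerivAt (V : ℕ → ℕ → ℂ) (hC : Conv V) (β : ℝ) (lam' : ℂ)
    (hν : ∀ n : ℕ, 1 ≤ n → (n : ℂ) - 2 * lam' * (β : ℂ) ≠ 0) (x : ℝ) :
    HasDerivAt (fun t : ℝ => f2 V β lam' (t : ℂ))
      (Complex.exp (-Complex.I * lam' * (β : ℂ) * (x : ℂ)) *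
        ((-(Complex.I * lam' * (β : ℂ))) *
            (∑' m : ℕ, coefA V (2 * lam' * (β : ℂ)) m
              * Complex.exp (Complex.I * (m : ℂ) * (x : ℂ)))
          + ∑' m : ℕ, coefA V (2 * lam' * (β : ℂ)) m * (Complex.I * (m : ℂ))
              * Complex.exp (Complex.I * (m : ℂ) * (x : ℂ)))) x := by
  have heq : (fun t : ℝ => f2 V β lam' (t : ℂ))
      = fun t : ℝ => Complex.exp ((-Complex.I * lam' * (β : ℂ)) * (t : ℂ)) *
        ∑' m : ℕ, coefA V (2 * lam' * (β : ℂ)) m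
          * Complex.exp (Complex.I * (m : ℂ) * (t : ℂ)) := by
    funext t
    rw [f2_repr V hC β lam' hν t]
  rw [heq]
  have h1 := exp_hasDerivAt (-Complex.I * lam' * (β : ℂ)) x
  have h2 := P_hasDerivAt V hC (2 * lam' * (β : ℂ)) hν x
  have h3 := h1.mul h2
  exact h3.congr_deriv (by ring)

theorem main (q : ℕ → ℂ) (V : ℕ → ℕ → ℂ)
    (hR : Recur q V) (hC : Conv V)
    (β : ℝ)
    (lam : ℂ) (hlamm : ∀ n : ℕ, 1 ≤ n → (n : ℂ) - 2 * lam * (β : ℂ) ≠ 0)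
    (hlamp : ∀ n : ℕ, 1 ≤ n → (n : ℂ) + 2 * lam * (β : ℂ) ≠ 0) :
    ∀ x : ℝ,
      f2 V β lam (x : ℂ) * deriv (fun t : ℝ => f2 V β (-lam) (t : ℂ)) x
        - deriv (fun t : ℝ => f2 V β lam (t : ℂ)) x * f2 V β (-lam) (x : ℂ)
      = 2 * Complex.I * lam * (β : ℂ) := by
  intro x
  set ν : ℂ := 2 * lam * (β : ℂ) with hνdef
  have hνm : ∀ n : ℕ, 1 ≤ n → (n : ℂ) - ν ≠ 0 := hlamm
  have hνp : ∀ n : ℕ, 1 ≤ n → (n : ℂ) + ν ≠ 0 := hlamp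
  have hneg : 2 * (-lam) * (β : ℂ) = -ν := by rw [hνdef]; ring
  have hν2 : ∀ n : ℕ, 1 ≤ n → (n : ℂ) - 2 * (-lam) * (β : ℂ) ≠ 0 := by
    intro n hn
    rw [hneg, sub_neg_eq_add]
    exact hνp n hn
  have hνm' : ∀ n : ℕ, 1 ≤ n → (n : ℂ) - (-ν) ≠ 0 := by
    intro n hn; rw [sub_neg_eq_add]; exact hνp n hn
  -- coefficient sequences
  set A : ℕ → ℂ := coefA V ν with hA
  set B : ℕ → ℂ := coefA V (-ν) with hB
  have hBeq : coefA V (2 * (-lam) * (β : ℂ)) = B := by rw [hneg, hB]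
  set E : ℕ → ℂ := fun m => Complex.exp (Complex.I * (m : ℂ) * (x : ℂ)) with hE
  set Sa : ℂ := ∑' m : ℕ, A m * E m with hSa
  set Sb : ℂ := ∑' m : ℕ, B m * E m with hSb
  set Da : ℂ := ∑' m : ℕ, A m * (Complex.I * (m : ℂ)) * E m with hDa
  set Db : ℂ := ∑' m : ℕ, B m * (Complex.I * (m : ℂ)) * E m with hDb
  -- representations and derivatives
  have r1 : f2 V β lam (x : ℂ)
      = Complex.exp (-Complex.I * lam * (β : ℂ) * (x : ℂ)) * Sa :=
    f2_repr V hC β lam hνm x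
  have r2 : f2 V β (-lam) (x : ℂ)
      = Complex.exp (-Complex.I * (-lam) * (β : ℂ) * (x : ℂ)) * Sb := by
    have := f2_repr V hC β (-lam) hν2 x
    rwa [hBeq] at this
  have d1 : deriv (fun t : ℝ => f2 V β lam (t : ℂ)) x
      = Complex.exp (-Complex.I * lam * (β : ℂ) * (x : ℂ)) *
        ((-(Complex.I * lam * (β : ℂ))) * Sa + Da) :=
    (f2_hasDerivAt V hC β lam hνm x).deriv
  have d2 : deriv (fun t : ℝ => f2 V β (-lam) (t : ℂ)) x
      = Complex.exp (-Complex.I * (-lam) * (β : ℂ) * (x : ℂ)) *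
        ((-(Complex.I * (-lam) * (β : ℂ))) * Sb + Db) := by
    have := (f2_hasDerivAt V hC β (-lam) hν2 x).deriv
    rwa [hBeq] at this
  have hprod : Complex.exp (-Complex.I * lam * (β : ℂ) * (x : ℂ)) *
      Complex.exp (-Complex.I * (-lam) * (β : ℂ) * (x : ℂ)) = 1 := by
    rw [← Complex.exp_add,
      show (-Complex.I * lam * (β : ℂ) * (x : ℂ)
        + -Complex.I * (-lam) * (β : ℂ) * (x : ℂ) : ℂ) = 0 from by ring,
      Complex.exp_zero]
  -- summability of the coefficient series
  have hnaP : Summable fun m : ℕ => ‖A m * E m‖ :=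
    (summable_congr fun m => norm_P V ν x m).mpr (summable_coef V hC ν hνm)
  have hnbP : Summable fun m : ℕ => ‖B m * E m‖ :=
    (summable_congr fun m => norm_P V (-ν) x m).mpr (summable_coef V hC (-ν) hνm')
  have hnormQ : ∀ (ν' : ℂ) (m : ℕ), ‖coefA V ν' m * (Complex.I * (m : ℂ)) * E m‖
      = (m : ℝ) * ‖coefA V ν' m‖ := by
    intro ν' m
    have hc : ((m : ℕ) : ℂ) = (((m : ℕ) : ℝ) : ℂ) := by push_cast; ring
    simp only [hE]
    rw [norm_mul, norm_mul, norm_mul, Complex.norm_I, one_mul, hc, norm_exp_I_nat_mul,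
      mul_one, Complex.norm_real, Real.norm_of_nonneg (Nat.cast_nonneg m)]
    ring
  have hnaQ : Summable fun m : ℕ => ‖A m * (Complex.I * (m : ℂ)) * E m‖ :=
    (summable_congr fun m => hnormQ ν m).mpr (summable_coef_mul V hC ν hνm)
  have hnbQ : Summable fun m : ℕ => ‖B m * (Complex.I * (m : ℂ)) * E m‖ :=
    (summable_congr fun m => hnormQ (-ν) m).mpr (summable_coef_mul V hC (-ν) hνm')
  -- Cauchy products
  have c1 : Sa * Sb = ∑' n : ℕ, ∑ kl ∈ Finset.HasAntidiagonal.antidiagonal n,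
      (A kl.1 * E kl.1) * (B kl.2 * E kl.2) :=
    tsum_mul_tsum_eq_tsum_sum_antidiagonal_of_summable_norm hnaP hnbP
  have c2 : Sa * Db = ∑' n : ℕ, ∑ kl ∈ Finset.HasAntidiagonal.antidiagonal n,
      (A kl.1 * E kl.1) * (B kl.2 * (Complex.I * (kl.2 : ℂ)) * E kl.2) :=
    tsum_mul_tsum_eq_tsum_sum_antidiagonal_of_summable_norm hnaP hnbQ
  have c3 : Da * Sb = ∑' n : ℕ, ∑ kl ∈ Finset.HasAntidiagonal.antidiagonal n,
      (A kl.1 * (Complex.I * (kl.1 : ℂ)) * E kl.1) * (B kl.2 * E kl.2) :=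
    tsum_mul_tsum_eq_tsum_sum_antidiagonal_of_summable_norm hnaQ hnbP
  have s1 : Summable fun n : ℕ => ∑ kl ∈ Finset.HasAntidiagonal.antidiagonal n,
      (A kl.1 * E kl.1) * (B kl.2 * E kl.2) :=
    (summable_norm_sum_mul_antidiagonal_of_summable_norm hnaP hnbP).of_norm
  have s2 : Summable fun n : ℕ => ∑ kl ∈ Finset.HasAntidiagonal.antidiagonal n,
      (A kl.1 * E kl.1) * (B kl.2 * (Complex.I * (kl.2 : ℂ)) * E kl.2) :=
    (summable_norm_sum_mul_antidiagonal_of_summable_norm hnaP hnbQ).of_norm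
  have s3 : Summable fun n : ℕ => ∑ kl ∈ Finset.HasAntidiagonal.antidiagonal n,
      (A kl.1 * (Complex.I * (kl.1 : ℂ)) * E kl.1) * (B kl.2 * E kl.2) :=
    (summable_norm_sum_mul_antidiagonal_of_summable_norm hnaQ hnbP).of_norm
  -- the combined series
  have key : Sa * ((-(Complex.I * (-lam) * (β : ℂ))) * Sb + Db)
      - ((-(Complex.I * lam * (β : ℂ))) * Sa + Da) * Sb
      = 2 * Complex.I * lam * (β : ℂ) := by
    have expand : Sa * ((-(Complex.I * (-lam) * (β : ℂ))) * Sb + Db)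
        - ((-(Complex.I * lam * (β : ℂ))) * Sa + Da) * Sb
        = (Complex.I * ν) * (Sa * Sb) + Sa * Db - Da * Sb := by
      rw [hνdef]; ring
    rw [expand, c1, c2, c3, ← tsum_mul_left, ← Summable.tsum_add (s1.mul_left _) s2,
      ← Summable.tsum_sub ((s1.mul_left _).add s2) s3]
    have hterm : ∀ n : ℕ,
        (Complex.I * ν) * (∑ kl ∈ Finset.HasAntidiagonal.antidiagonal n,
            (A kl.1 * E kl.1) * (B kl.2 * E kl.2))
          + (∑ kl ∈ Finset.HasAntidiagonal.antidiagonal n,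
            (A kl.1 * E kl.1) * (B kl.2 * (Complex.I * (kl.2 : ℂ)) * E kl.2))
          - (∑ kl ∈ Finset.HasAntidiagonal.antidiagonal n,
            (A kl.1 * (Complex.I * (kl.1 : ℂ)) * E kl.1) * (B kl.2 * E kl.2))
        = (Complex.I * E n) * ∑ kl ∈ Finset.HasAntidiagonal.antidiagonal n,
            (ν + (n : ℂ) - 2 * (kl.1 : ℂ)) * A kl.1 * B kl.2 := by
      intro n
      rw [Finset.mul_sum, Finset.mul_sum, ← Finset.sum_add_distrib,
        ← Finset.sum_sub_distrib]
      refine Finset.sum_congr rfl fun kl hkl => ?_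
      have hklm : kl.1 + kl.2 = n := Finset.HasAntidiagonal.mem_antidiagonal.mp hkl
      have hEE : E kl.1 * E kl.2 = E n := by
        rw [hE]
        dsimp only
        rw [← Complex.exp_add]
        congr 1
        rw [← hklm]
        push_cast
        ring
      have hcast : ((kl.1 : ℂ) + (kl.2 : ℂ)) = (n : ℂ) := by
        rw [← hklm]; push_cast; ring
      calc (Complex.I * ν) * ((A kl.1 * E kl.1) * (B kl.2 * E kl.2))
            + (A kl.1 * E kl.1) * (B kl.2 * (Complex.I * (kl.2 : ℂ)) * E kl.2)
            - (A kl.1 * (Complex.I * (kl.1 : ℂ)) * E kl.1) * (B kl.2 * E kl.2)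
          = (Complex.I * (ν + (kl.2 : ℂ) - (kl.1 : ℂ))) * (A kl.1 * B kl.2)
              * (E kl.1 * E kl.2) := by ring
        _ = (Complex.I * E n) * ((ν + (n : ℂ) - 2 * (kl.1 : ℂ)) * A kl.1 * B kl.2) := by
            rw [hEE]
            rw [show ((kl.2 : ℂ)) = (n : ℂ) - (kl.1 : ℂ) from by
              rw [← hcast]; ring]
            ring
    rw [tsum_congr hterm]
    rw [tsum_eq_single 0 ?hzero]
    · simp only [Finset.Nat.antidiagonal_zero, Finset.sum_singleton, Nat.cast_zero,
        coefA_zero, hE]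
      simp only [hA, hB, coefA_zero]
      rw [hνdef]
      simp [Complex.exp_zero]
      ring
    · intro n hn
      have h1n : 1 ≤ n := by omega
      rw [w_zero q V hR ν hνm hνp n h1n, mul_zero]
  calc f2 V β lam (x : ℂ) * deriv (fun t : ℝ => f2 V β (-lam) (t : ℂ)) x
        - deriv (fun t : ℝ => f2 V β lam (t : ℂ)) x * f2 V β (-lam) (x : ℂ)
      = (Complex.exp (-Complex.I * lam * (β : ℂ) * (x : ℂ)) *
          Complex.exp (-Complex.I * (-lam) * (β : ℂ) * (x : ℂ))) *
          (Sa * ((-(Complex.I * (-lam) * (β : ℂ))) * Sb + Db)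
            - ((-(Complex.I * lam * (β : ℂ))) * Sa + Da) * Sb) := by
        rw [r1, r2, d1, d2]; ring
    _ = 1 * (2 * Complex.I * lam * (β : ℂ)) := by rw [hprod, key]
    _ = 2 * Complex.I * lam * (β : ℂ) := one_mul _


end Stmt6Aux

theorem stmt6 (q : ℕ → ℂ) (V : ℕ → ℕ → ℂ)
    (hq : Summable fun n : ℕ => ‖q (n + 1)‖ ^ 2)
    (hR : Recur q V) (hC : Conv V)
    (β : ℝ) (hβ : 0 < β) (hβ1 : β ≠ 1)
    (lam : ℂ) (hlamm : ∀ n : ℕ, 1 ≤ n → (n : ℂ) - 2 * lam * (β : ℂ) ≠ 0)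
    (hlamp : ∀ n : ℕ, 1 ≤ n → (n : ℂ) + 2 * lam * (β : ℂ) ≠ 0) :
    ∀ x : ℝ,
      f2 V β lam (x : ℂ) * deriv (fun t : ℝ => f2 V β (-lam) (t : ℂ)) x
        - deriv (fun t : ℝ => f2 V β lam (t : ℂ)) x * f2 V β (-lam) (x : ℂ)
      = 2 * Complex.I * lam * (β : ℂ) := by
  intro x
  exact Stmt6Aux.main q V hR hC β lam hlamm hlamp x
end

section
/- For every integer n ≥ 1 and every x ∈ ℝ, the limit lim_{λ→−n/2} (n + 2λ)·f₁⁺(x,λ) exists and equals e^{−inx/2}·Σ_{α=n}^∞ V_{nα} e^{iαx}. -/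
open Complex MeasureTheory Filter Topology

theorem stmt8 (q : ℕ → ℂ) (V : ℕ → ℕ → ℂ)
    (hq : Summable fun n : ℕ => ‖q (n + 1)‖ ^ 2)
    (hR : Recur q V) (hC : Conv V)
    (n : ℕ) (hn : 1 ≤ n) (x : ℝ) :
    Tendsto (fun lam : ℂ => ((n : ℂ) + 2 * lam) * f1 V lam (x : ℂ))
      (𝓝[≠] (-(n : ℂ) / 2))
      (𝓝 (Complex.exp (-Complex.I * (n : ℂ) * (x : ℂ) / 2) *
        ∑' k : ℕ, V n (n + k) *
          Complex.exp (Complex.I * ((n : ℂ) + (k : ℂ)) * (x : ℂ)))) := by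
  obtain ⟨m, rfl⟩ : ∃ m, n = m + 1 := ⟨n - 1, (Nat.succ_pred_eq_of_pos hn).symm⟩
  set lam0 : ℂ := -((m + 1 : ℕ) : ℂ) / 2 with hlam0
  set S : ℕ → ℂ := fun j => ∑' k : ℕ, V (j + 1) (j + 1 + k) *
      Complex.exp (Complex.I * ((j : ℂ) + 1 + (k : ℂ)) * (x : ℂ)) with hS
  set c : ℂ → ℂ := fun lam => ((m : ℂ) + 1) + 2 * lam with hc
  -- basic facts
  have hcc : Continuous c := by unfold c; continuity
  have hc0 : c lam0 = 0 := by simp only [hc, hlam0]; push_cast; ring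
  have hexp1 : ∀ (r : ℝ), ‖Complex.exp (Complex.I * (r : ℂ) * (x : ℂ))‖ = 1 := by
    intro r
    rw [Complex.norm_exp]
    simp
  have hnorm : ∀ j k : ℕ, ‖V (j + 1) (j + 1 + k) *
      Complex.exp (Complex.I * ((j : ℂ) + 1 + (k : ℂ)) * (x : ℂ))‖
      = ‖V (j + 1) (j + 1 + k)‖ := by
    intro j k
    rw [norm_mul]
    have h : ((j : ℂ) + 1 + (k : ℂ)) = (((j + 1 + k : ℕ) : ℝ) : ℂ) := by push_cast; ring
    rw [h, hexp1, mul_one]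
  have hb_sum : ∀ j : ℕ, Summable (fun k : ℕ => ‖V (j + 1) (j + 1 + k)‖) := by
    intro j
    refine Summable.of_nonneg_of_le (fun k => norm_nonneg _) (fun k => ?_)
      (hC.1 (j + 1) (by omega))
    have h1 : (1 : ℝ) ≤ ((j + 1 + k : ℕ) : ℝ) := by exact_mod_cast (by omega : 1 ≤ j + 1 + k)
    nlinarith [norm_nonneg (V (j + 1) (j + 1 + k))]
  set b : ℕ → ℝ := fun j => ∑' k : ℕ, ‖V (j + 1) (j + 1 + k)‖ with hbdef
  have hb0 : ∀ j, 0 ≤ b j := fun j => tsum_nonneg fun k => norm_nonneg _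
  have hSsum : ∀ j : ℕ, Summable (fun k : ℕ => ‖V (j + 1) (j + 1 + k) *
      Complex.exp (Complex.I * ((j : ℂ) + 1 + (k : ℂ)) * (x : ℂ))‖) := by
    intro j
    exact (hb_sum j).congr fun k => (hnorm j k).symm
  have hSb : ∀ j, ‖S j‖ ≤ b j := by
    intro j
    refine (norm_tsum_le_tsum_norm (hSsum j)).trans_eq ?_
    exact tsum_congr fun k => hnorm j k
  have hb : Summable b := by
    refine Summable.of_nonneg_of_le hb0 (fun j => ?_) hC.2
    have hs1 : Summable (fun k : ℕ => ((j : ℝ) + 1)⁻¹ *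
        (((j + 1 + k : ℕ) : ℝ) * ‖V (j + 1) (j + 1 + k)‖)) :=
      (hC.1 (j + 1) (by omega)).mul_left _
    calc b j ≤ ∑' k : ℕ, ((j : ℝ) + 1)⁻¹ *
        (((j + 1 + k : ℕ) : ℝ) * ‖V (j + 1) (j + 1 + k)‖) := by
          refine Summable.tsum_le_tsum (fun k => ?_) (hb_sum j) hs1
          have h2 : (0 : ℝ) < (j : ℝ) + 1 := by positivity
          have h1 : ((j : ℝ) + 1) ≤ ((j + 1 + k : ℕ) : ℝ) := by push_cast; linarith [Nat.cast_nonneg (α := ℝ) k]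
          have hid := mul_inv_cancel₀ (ne_of_gt h2)
          nlinarith [norm_nonneg (V (j + 1) (j + 1 + k)), inv_nonneg.mpr h2.le,
            mul_le_mul_of_nonneg_right h1 (norm_nonneg (V (j + 1) (j + 1 + k)))]
      _ = ((j : ℝ) + 1)⁻¹ * ∑' k : ℕ, (((j + 1 + k : ℕ) : ℝ) * ‖V (j + 1) (j + 1 + k)‖) :=
          tsum_mul_left
  -- main algebraic identity
  have heq : ∀ lam : ℂ, (((m + 1 : ℕ) : ℂ) + 2 * lam) * f1 V lam (x : ℂ)
      = Complex.exp (Complex.I * lam * (x : ℂ)) *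
        (c lam + ∑' j : ℕ, c lam * ((((j : ℂ) + 1) + 2 * lam)⁻¹ * S j)) := by
    intro lam
    simp only [hc, hS, f1]
    rw [tsum_mul_left]
    push_cast
    ring
  -- limit pieces
  have hc0' : Tendsto c (𝓝[≠] lam0) (𝓝 0) := by
    have h := hcc.tendsto lam0
    rw [hc0] at h
    exact h.mono_left nhdsWithin_le_nhds
  have hne : ∀ᶠ lam in 𝓝[≠] lam0, lam ≠ lam0 := eventually_mem_nhdsWithin
  have hcne : ∀ lam : ℂ, lam ≠ lam0 → c lam ≠ 0 := by
    intro lam h hcontra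
    apply h
    rw [hlam0]; push_cast
    simp only [hc] at hcontra
    linear_combination hcontra / 2
  have hsmall : ∀ᶠ lam in 𝓝[≠] lam0, ‖c lam‖ ≤ 1 / 2 := by
    have h := hc0'.norm
    rw [norm_zero] at h
    exact h.eventually_le_const (by norm_num)
  have hts : Tendsto (fun lam : ℂ => ∑' j : ℕ, c lam * ((((j : ℂ) + 1) + 2 * lam)⁻¹ * S j))
      (𝓝[≠] lam0) (𝓝 (∑' j : ℕ, if j = m then S m else 0)) := by
    apply tendsto_tsum_of_dominated_convergence hb
    · intro j
      by_cases hj : j = m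
      · subst hj
        simp only [if_pos rfl]
        refine Tendsto.congr' ?_ tendsto_const_nhds
        filter_upwards [hne] with lam hlam
        have hcn := hcne lam hlam
        have hx1 : c lam * ((((j : ℂ) + 1) + 2 * lam)⁻¹ * S j) = S j := by
          rw [show (((j : ℂ) + 1) + 2 * lam) = c lam from rfl, ← mul_assoc,
            mul_inv_cancel₀ hcn, one_mul]
        simp [hx1]
      · simp only [if_neg hj]
        have hne0 : ((j : ℂ) + 1) + 2 * lam0 ≠ 0 := by
          rw [hlam0]; push_cast
          intro h
          exact hj (by exact_mod_cast (by linear_combination h : (j : ℂ) = (m : ℂ)))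
        have h1 : Tendsto (fun lam : ℂ => (((j : ℂ) + 1) + 2 * lam)⁻¹ * S j) (𝓝 lam0)
            (𝓝 ((((j : ℂ) + 1) + 2 * lam0)⁻¹ * S j)) := by
          refine Tendsto.mul_const _ ?_
          exact Tendsto.inv₀ ((by continuity : Continuous fun lam : ℂ =>
            ((j : ℂ) + 1) + 2 * lam).tendsto lam0) hne0
        have h2 := hc0'.mul (h1.mono_left nhdsWithin_le_nhds)
        simpa using h2
    · filter_upwards [hsmall, hne] with lam h12 hlam
      intro j
      by_cases hj : j = m
      · subst hj
        have hcn := hcne lam hlam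
        rw [show (((j : ℂ) + 1) + 2 * lam) = c lam from rfl, ← mul_assoc,
          mul_inv_cancel₀ hcn, one_mul]
        exact hSb j
      · have hjm : (1 : ℝ) ≤ ‖(j : ℂ) - (m : ℂ)‖ := by
          have h1 : (1 : ℤ) ≤ |(j : ℤ) - (m : ℤ)| := by
            have hjz : (j : ℤ) ≠ (m : ℤ) := by exact_mod_cast hj
            rcases lt_or_gt_of_ne hjz with h | h
            · rw [abs_of_neg (by omega)]; omega
            · rw [abs_of_pos (by omega)]; omega
          have h2 : ((j : ℂ) - (m : ℂ)) = ((((j : ℤ) - (m : ℤ) : ℤ) : ℝ) : ℂ) := by push_cast; ring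
          rw [h2, Complex.norm_real, Real.norm_eq_abs, ← Int.cast_abs]
          exact_mod_cast h1
        have hd : (1 : ℝ) / 2 ≤ ‖((j : ℂ) + 1) + 2 * lam‖ := by
          have h3 : (((j : ℂ) + 1) + 2 * lam) = ((j : ℂ) - (m : ℂ)) - (-(c lam)) := by
            simp only [hc]; ring
          rw [h3]
          have h4 := norm_sub_norm_le ((j : ℂ) - (m : ℂ)) (-(c lam))
          rw [norm_neg] at h4
          linarith
        have hinv : ‖(((j : ℂ) + 1) + 2 * lam)‖⁻¹ ≤ 2 := by
          have h0 : (0 : ℝ) < ‖(((j : ℂ) + 1) + 2 * lam)‖ := by linarith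
          have := inv_anti₀ (by norm_num : (0:ℝ) < 1/2) hd
          simpa using this
        rw [norm_mul, norm_mul, norm_inv]
        have hs := hSb j
        have hstep : ‖(((j : ℂ) + 1) + 2 * lam)‖⁻¹ * ‖S j‖ ≤ 2 * b j :=
          mul_le_mul hinv hs (norm_nonneg _) (by norm_num)
        have hstep2 : ‖c lam‖ * (‖(((j : ℂ) + 1) + 2 * lam)‖⁻¹ * ‖S j‖)
            ≤ (1 / 2) * (2 * b j) :=
          mul_le_mul h12 hstep (by positivity) (by norm_num)
        linarith
  have hexp_t : Tendsto (fun lam : ℂ => Complex.exp (Complex.I * lam * (x : ℂ)))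
      (𝓝[≠] lam0) (𝓝 (Complex.exp (Complex.I * lam0 * (x : ℂ)))) :=
    ((Complex.continuous_exp.comp (by continuity)).tendsto lam0).mono_left nhdsWithin_le_nhds
  have hmain := hexp_t.mul (hc0'.add hts)
  rw [tendsto_congr heq]
  convert hmain using 2
  rw [zero_add, tsum_ite_eq]
  congr 1
  · congr 1
    rw [hlam0]
    ring
  · simp only [hS]
    refine tsum_congr fun k => ?_
    push_cast
    ring_nf
end

section
/- For every integer n ≥ 1 and every x ∈ ℝ, e^{−inx/2}·Σ_{α=n}^∞ V_{nα} e^{iαx} = V_{nn}·f₁⁺(x, n/2); equivalently, Σ_{α=n}^∞ V_{nα} e^{iαx} = V_{nn}·e^{inx}·(1 + Σ_{m=1}^∞ (m+n)^{−1}·Σ_{α=m}^∞ V_{mα} e^{iαx}). -/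
open Complex MeasureTheory Filter Topology

noncomputable def Afun (V : ℕ → ℕ → ℂ) (n : ℕ) : ℕ → ℂ := fun k =>
  if k = 0 then 1 else ∑ m ∈ Finset.Icc 1 k, ((m : ℂ) + (n : ℂ))⁻¹ * V m k

lemma Arec (q : ℕ → ℂ) (V : ℕ → ℕ → ℂ)
    (hR1 : ∀ n α : ℕ, 1 ≤ n → n < α →
      (α : ℂ) * ((α : ℂ) - (n : ℂ)) * V n α
        + ∑ s ∈ Finset.Icc n (α - 1), q (α - s) * V n s = 0)
    (hR2 : ∀ α : ℕ, 1 ≤ α → (α : ℂ) * ∑ n ∈ Finset.Icc 1 α, V n α + q α = 0)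
    (n : ℕ) (k : ℕ) (hk : 1 ≤ k) :
    ((n : ℂ) + k) * k * Afun V n k + ∑ j ∈ Finset.range k, q (k - j) * Afun V n j = 0 := by
  have hA : Afun V n k = ∑ m ∈ Finset.Icc 1 k, ((m : ℂ) + (n : ℂ))⁻¹ * V m k := by
    simp [Afun, Nat.one_le_iff_ne_zero.mp hk]
  have hmn : ∀ m : ℕ, 1 ≤ m → ((m : ℂ) + (n : ℂ)) ≠ 0 := by
    intro m hm h
    have := congrArg Complex.re h
    simp at this
    have h1 : (1:ℝ) ≤ (m:ℝ) := by exact_mod_cast hm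
    have h2 : (0:ℝ) ≤ (n:ℝ) := by positivity
    linarith
  have hsplit : ((n : ℂ) + k) * k * Afun V n k
      = (k : ℂ) * ∑ m ∈ Finset.Icc 1 k, V m k
        + ∑ m ∈ Finset.Icc 1 k, ((m : ℂ) + (n : ℂ))⁻¹ * ((k : ℂ) * ((k : ℂ) - (m : ℂ)) * V m k) := by
    rw [hA, Finset.mul_sum, Finset.mul_sum, ← Finset.sum_add_distrib]
    refine Finset.sum_congr rfl fun m hm => ?_
    have := hmn m (Finset.mem_Icc.mp hm).1
    field_simp
    ring
  have h1 : (k : ℂ) * ∑ m ∈ Finset.Icc 1 k, V m k = -q k := by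
    have := hR2 k hk; linear_combination this
  have h2 : ∑ m ∈ Finset.Icc 1 k, ((m : ℂ) + (n : ℂ))⁻¹ * ((k : ℂ) * ((k : ℂ) - (m : ℂ)) * V m k)
      = -∑ s ∈ Finset.Icc 1 (k - 1), q (k - s) * Afun V n s := by
    rw [show Finset.Icc 1 k = insert k (Finset.Icc 1 (k-1)) by
      ext j; simp only [Finset.mem_Icc, Finset.mem_insert]; omega]
    rw [Finset.sum_insert (by simp only [Finset.mem_Icc]; omega)]
    have hkk : ((k : ℂ) + (n : ℂ))⁻¹ * ((k : ℂ) * ((k : ℂ) - (k : ℂ)) * V k k) = 0 := by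
      simp
    rw [hkk, zero_add]
    have hstep : ∀ m ∈ Finset.Icc 1 (k-1),
        ((m : ℂ) + (n : ℂ))⁻¹ * ((k : ℂ) * ((k : ℂ) - (m : ℂ)) * V m k)
        = ∑ s ∈ Finset.Icc m (k-1), -(((m : ℂ) + (n : ℂ))⁻¹ * (q (k - s) * V m s)) := by
      intro m hm
      obtain ⟨hm1, hm2⟩ := Finset.mem_Icc.mp hm
      have hrec := hR1 m k hm1 (by omega)
      have hX : (k : ℂ) * ((k : ℂ) - (m : ℂ)) * V m k
          = -∑ s ∈ Finset.Icc m (k - 1), q (k - s) * V m s := by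
        linear_combination hrec
      rw [hX, Finset.sum_neg_distrib, ← Finset.mul_sum]
      ring
    rw [Finset.sum_congr rfl hstep]
    rw [Finset.sum_comm' (t' := Finset.Icc 1 (k-1)) (s' := fun s => Finset.Icc 1 s)
      (by intro m s; simp only [Finset.mem_Icc]; omega)]
    rw [← Finset.sum_neg_distrib]
    refine Finset.sum_congr rfl fun s hs => ?_
    obtain ⟨hs1, hs2⟩ := Finset.mem_Icc.mp hs
    have hAs : Afun V n s = ∑ m ∈ Finset.Icc 1 s, ((m : ℂ) + (n : ℂ))⁻¹ * V m s := by
      simp [Afun, Nat.one_le_iff_ne_zero.mp hs1]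
    rw [hAs, Finset.mul_sum, ← Finset.sum_neg_distrib]
    refine Finset.sum_congr rfl fun m hm => by ring
  have h3 : ∑ j ∈ Finset.range k, q (k - j) * Afun V n j
      = q k + ∑ s ∈ Finset.Icc 1 (k - 1), q (k - s) * Afun V n s := by
    rw [show Finset.range k = insert 0 (Finset.Icc 1 (k-1)) by
      ext j; simp only [Finset.mem_range, Finset.mem_Icc, Finset.mem_insert]; omega]
    rw [Finset.sum_insert (by simp)]
    simp [Afun]
  rw [hsplit, h1, h2, h3]
  ring

lemma coeff (q : ℕ → ℂ) (V : ℕ → ℕ → ℂ)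
    (hR1 : ∀ n α : ℕ, 1 ≤ n → n < α →
      (α : ℂ) * ((α : ℂ) - (n : ℂ)) * V n α
        + ∑ s ∈ Finset.Icc n (α - 1), q (α - s) * V n s = 0)
    (hR2 : ∀ α : ℕ, 1 ≤ α → (α : ℂ) * ∑ n ∈ Finset.Icc 1 α, V n α + q α = 0)
    (n : ℕ) (hn : 1 ≤ n) : ∀ k, V n (n + k) = V n n * Afun V n k := by
  intro k
  induction k using Nat.strong_induction_on with
  | _ k ih =>
    rcases Nat.eq_zero_or_pos k with hk0 | hk
    · simp [hk0, Afun]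
    · have hrec := hR1 n (n + k) hn (by omega)
      have hre : ∑ s ∈ Finset.Icc n (n + k - 1), q (n + k - s) * V n s
          = ∑ j ∈ Finset.range k, q (k - j) * (V n n * Afun V n j) := by
        rw [show Finset.Icc n (n + k - 1) = Finset.image (fun j => n + j) (Finset.range k) by
          ext s
          simp only [Finset.mem_Icc, Finset.mem_image, Finset.mem_range]
          constructor
          · rintro ⟨h1, h2⟩; exact ⟨s - n, by omega, by omega⟩
          · rintro ⟨j, hj, rfl⟩; omega]
        rw [Finset.sum_image (by intro a _ b _ h; simp only at h; omega)]
        refine Finset.sum_congr rfl fun j hj => ?_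
        have hjk := Finset.mem_range.mp hj
        rw [show n + k - (n + j) = k - j by omega, ih j hjk]
      have hA := Arec q V hR1 hR2 n k hk
      have hcast : ((n + k : ℕ) : ℂ) * (((n + k : ℕ) : ℂ) - (n : ℂ)) = ((n : ℂ) + k) * k := by
        push_cast; ring
      have hne : ((n : ℂ) + k) * k ≠ 0 := by
        have h1 : ((n : ℂ) + k) ≠ 0 := by
          intro h
          have := congrArg Complex.re h
          simp at this
          have : (n : ℝ) + k = 0 := by push_cast at this ⊢; linarith
          have hn' : (1:ℝ) ≤ (n:ℝ) := by exact_mod_cast hn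
          have : (0:ℝ) ≤ (k:ℝ) := by positivity
          linarith
        have h2 : (k : ℂ) ≠ 0 := Nat.cast_ne_zero.mpr (by omega)
        exact mul_ne_zero h1 h2
      apply mul_left_cancel₀ hne
      have : ((n : ℂ) + k) * k * V n (n + k)
          = -∑ j ∈ Finset.range k, q (k - j) * (V n n * Afun V n j) := by
        rw [← hre]; rw [hcast] at hrec; linear_combination hrec
      rw [this]
      have hS : ∑ j ∈ Finset.range k, q (k - j) * (V n n * Afun V n j)
          = V n n * ∑ j ∈ Finset.range k, q (k - j) * Afun V n j := by
        rw [Finset.mul_sum]; exact Finset.sum_congr rfl fun j _ => by ring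
      rw [hS]
      linear_combination -(V n n) * hA

set_option maxHeartbeats 1000000 in
theorem stmt9 (q : ℕ → ℂ) (V : ℕ → ℕ → ℂ)
    (hq : Summable fun n : ℕ => ‖q (n + 1)‖ ^ 2)
    (hR : Recur q V) (hC : Conv V)
    (n : ℕ) (hn : 1 ≤ n) (x : ℝ) :
    Complex.exp (-Complex.I * (n : ℂ) * (x : ℂ) / 2) *
        ∑' k : ℕ, V n (n + k) *
          Complex.exp (Complex.I * ((n : ℂ) + (k : ℂ)) * (x : ℂ))
      = V n n * f1 V ((n : ℂ) / 2) (x : ℂ) := by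
  obtain ⟨hR1, hR2⟩ := hR
  obtain ⟨hC1, hC2⟩ := hC
  set X : ℂ := (x : ℂ) with hX
  have hexp1 : ∀ r : ℝ, ‖Complex.exp (Complex.I * (r : ℂ) * X)‖ = 1 := by
    intro r
    rw [show Complex.I * (r : ℂ) * X = ((r * x : ℝ) : ℂ) * Complex.I by push_cast; ring]
    simpa using Complex.norm_exp_ofReal_mul_I (r * x)
  have hVsum : ∀ m : ℕ, 1 ≤ m → Summable fun k => ‖V m (m + k)‖ := by
    intro m hm
    refine (hC1 m hm).of_nonneg_of_le (fun k => norm_nonneg _) (fun k => ?_)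
    have h1 : (1 : ℝ) ≤ ((m + k : ℕ) : ℝ) := by exact_mod_cast Nat.one_le_iff_ne_zero.mpr (by omega)
    nlinarith [norm_nonneg (V m (m + k))]
  -- the double family
  set F : ℕ × ℕ → ℂ := fun p => ((p.1 : ℂ) + 1 + (n : ℂ))⁻¹ *
      (V (p.1 + 1) (p.1 + 1 + p.2) *
        Complex.exp (Complex.I * ((p.1 : ℂ) + 1 + (p.2 : ℂ)) * X)) with hFdef
  set B : ℕ × ℕ → ℝ := fun p => ((p.1 : ℝ) + 1)⁻¹ *
      (((p.1 + 1 + p.2 : ℕ) : ℝ) * ‖V (p.1 + 1) (p.1 + 1 + p.2)‖) with hBdef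
  have hBnonneg : ∀ p, 0 ≤ B p := fun p => by positivity
  have hBsum : Summable B := by
    rw [summable_prod_of_nonneg hBnonneg]
    constructor
    · intro m
      simp only [hBdef]
      exact (hC1 (m + 1) (by omega)).mul_left _
    · have : (fun m : ℕ => ∑' k, B (m, k))
          = fun m : ℕ => ((m : ℝ) + 1)⁻¹ * ∑' k : ℕ, ((m + 1 + k : ℕ) : ℝ) * ‖V (m + 1) (m + 1 + k)‖ := by
        funext m
        simp only [hBdef]
        rw [tsum_mul_left]
      rw [this]
      exact hC2
  have hFnorm : ∀ p : ℕ × ℕ, ‖F p‖ ≤ B p := by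
    rintro ⟨m, k⟩
    simp only [hFdef, hBdef]
    rw [norm_mul, norm_mul]
    have he : ‖Complex.exp (Complex.I * ((m : ℂ) + 1 + (k : ℂ)) * X)‖ = 1 := by
      rw [show ((m : ℂ) + 1 + (k : ℂ)) = (((m + 1 + k : ℕ) : ℝ) : ℂ) by push_cast; ring]
      exact hexp1 _
    rw [he, mul_one]
    have hc : ‖((m : ℂ) + 1 + (n : ℂ))⁻¹‖ = (((m + 1 + n : ℕ) : ℝ))⁻¹ := by
      rw [show ((m : ℂ) + 1 + (n : ℂ)) = (((m + 1 + n : ℕ) : ℝ) : ℂ) by push_cast; ring]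
      rw [norm_inv, Complex.norm_real, Real.norm_of_nonneg (by positivity)]
    rw [hc]
    have h1 : (((m + 1 + n : ℕ) : ℝ))⁻¹ ≤ ((m : ℝ) + 1)⁻¹ := by
      apply inv_anti₀ (by positivity)
      push_cast; linarith [Nat.cast_nonneg (α := ℝ) n]
    have h2 : ‖V (m + 1) (m + 1 + k)‖ ≤ ((m + 1 + k : ℕ) : ℝ) * ‖V (m + 1) (m + 1 + k)‖ := by
      have : (1 : ℝ) ≤ ((m + 1 + k : ℕ) : ℝ) := by exact_mod_cast Nat.one_le_iff_ne_zero.mpr (by omega)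
      nlinarith [norm_nonneg (V (m + 1) (m + 1 + k))]
    have h3 : (0 : ℝ) ≤ ‖V (m + 1) (m + 1 + k)‖ := norm_nonneg _
    calc (((m + 1 + n : ℕ) : ℝ))⁻¹ * ‖V (m + 1) (m + 1 + k)‖
        ≤ ((m : ℝ) + 1)⁻¹ * ‖V (m + 1) (m + 1 + k)‖ := by
          apply mul_le_mul_of_nonneg_right h1 h3
      _ ≤ ((m : ℝ) + 1)⁻¹ * (((m + 1 + k : ℕ) : ℝ) * ‖V (m + 1) (m + 1 + k)‖) := by
          apply mul_le_mul_of_nonneg_left h2 (by positivity)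
  have hFsum : Summable F := Summable.of_norm_bounded hBsum hFnorm
  have hFrow : ∀ m : ℕ, Summable fun k => F (m, k) := fun m => hFsum.prod_factor m
  -- the regrouped family
  set G : ℕ × ℕ → ℂ := fun p => if p.2 ≤ p.1 then
      ((p.2 : ℂ) + 1 + (n : ℂ))⁻¹ *
        (V (p.2 + 1) (p.1 + 1) * Complex.exp (Complex.I * ((p.1 : ℂ) + 1) * X)) else 0
    with hGdef
  set i : ℕ × ℕ → ℕ × ℕ := fun p => (p.1 + p.2, p.1) with hidef
  have hi : Function.Injective i := by
    rintro ⟨a, b⟩ ⟨c, d⟩ h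
    simp only [hidef, Prod.mk.injEq] at h
    simp only [Prod.mk.injEq]
    omega
  have hGF : ∀ p : ℕ × ℕ, G (i p) = F p := by
    rintro ⟨m, j⟩
    simp only [hGdef, hidef, hFdef]
    rw [if_pos (by omega : m ≤ m + j)]
    rw [show m + j + 1 = m + 1 + j by omega]
    congr 2
    push_cast
    ring
  have hGsupp : Function.support G ⊆ Set.range i := by
    rintro ⟨a, m⟩ hp
    have hma : m ≤ a := by
      by_contra h
      apply hp
      simp only [hGdef]
      rw [if_neg h]
    refine ⟨(m, a - m), ?_⟩
    simp only [hidef]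
    show (m + (a - m), m) = (a, m)
    rw [show m + (a - m) = a from by omega]
  have hGsum : Summable G := by
    rw [← hi.summable_iff (fun p hp => by
      by_contra h
      exact hp (hGsupp h))]
    have : G ∘ i = F := funext hGF
    rw [this]
    exact hFsum
  have hGrow : ∀ a : ℕ, Summable fun m => G (a, m) := fun a => hGsum.prod_factor a
  -- inner evaluation of G rows
  have hGinner : ∀ a : ℕ, (∑' m : ℕ, G (a, m))
      = Afun V n (a + 1) * Complex.exp (Complex.I * ((a : ℂ) + 1) * X) := by
    intro a
    rw [tsum_eq_sum (s := Finset.range (a + 1)) (fun m hm => by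
      simp only [hGdef]
      rw [if_neg (by simp at hm; omega)])]
    have hAa : Afun V n (a + 1)
        = ∑ m ∈ Finset.Icc 1 (a + 1), ((m : ℂ) + (n : ℂ))⁻¹ * V m (a + 1) := by
      simp [Afun]
    rw [hAa, show Finset.Icc 1 (a + 1) = Finset.image (fun m => m + 1) (Finset.range (a + 1)) by
      ext s; simp only [Finset.mem_Icc, Finset.mem_image, Finset.mem_range]
      constructor
      · rintro ⟨h1, h2⟩; exact ⟨s - 1, by omega, by omega⟩
      · rintro ⟨j, hj, rfl⟩; omega]
    rw [Finset.sum_image (by intro a _ b _ h; simp only at h; omega), Finset.sum_mul]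
    refine Finset.sum_congr rfl fun m hm => ?_
    simp only [hGdef]
    rw [if_pos (by simp at hm; omega : m ≤ a)]
    push_cast
    ring
  -- the key series equality
  have key : (∑' m : ℕ, (((m : ℂ) + 1) + 2 * ((n : ℂ) / 2))⁻¹ *
        ∑' k : ℕ, V (m + 1) (m + 1 + k) *
          Complex.exp (Complex.I * ((m : ℂ) + 1 + (k : ℂ)) * X))
      = ∑' a : ℕ, Afun V n (a + 1) * Complex.exp (Complex.I * ((a : ℂ) + 1) * X) := by
    have e1 : ∀ m : ℕ, (((m : ℂ) + 1) + 2 * ((n : ℂ) / 2))⁻¹ *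
        (∑' k : ℕ, V (m + 1) (m + 1 + k) *
          Complex.exp (Complex.I * ((m : ℂ) + 1 + (k : ℂ)) * X))
        = ∑' k : ℕ, F (m, k) := by
      intro m
      rw [show (((m : ℂ) + 1) + 2 * ((n : ℂ) / 2)) = ((m : ℂ) + 1 + (n : ℂ)) by ring]
      rw [← tsum_mul_left]
    rw [tsum_congr e1, ← Summable.tsum_prod' hFsum hFrow, ← tsum_congr hGF, hi.tsum_eq hGsupp,
      Summable.tsum_prod' hGsum hGrow, tsum_congr hGinner]
  -- left-hand side manipulation
  have hcoeff := coeff q V hR1 hR2 n hn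
  have hUsum : Summable fun k : ℕ => V n (n + k) * Complex.exp (Complex.I * (k : ℂ) * X) := by
    apply Summable.of_norm_bounded (hVsum n hn)
    intro k
    rw [norm_mul, show ((k : ℂ)) = (((k : ℕ) : ℝ) : ℂ) by push_cast; ring, hexp1, mul_one]
  have hT : (∑' k : ℕ, V n (n + k) * Complex.exp (Complex.I * ((n : ℂ) + (k : ℂ)) * X))
      = Complex.exp (Complex.I * (n : ℂ) * X) *
        ∑' k : ℕ, V n (n + k) * Complex.exp (Complex.I * (k : ℂ) * X) := by
    rw [← tsum_mul_left]
    refine tsum_congr fun k => ?_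
    rw [show Complex.I * ((n : ℂ) + (k : ℂ)) * X
        = Complex.I * (n : ℂ) * X + Complex.I * (k : ℂ) * X by ring, Complex.exp_add]
    ring
  have hU : (∑' k : ℕ, V n (n + k) * Complex.exp (Complex.I * (k : ℂ) * X))
      = V n n * (1 + ∑' a : ℕ, Afun V n (a + 1) * Complex.exp (Complex.I * ((a : ℂ) + 1) * X)) := by
    rw [Summable.tsum_eq_zero_add hUsum]
    simp only [Nat.cast_zero, zero_mul, mul_zero, Complex.exp_zero, mul_one, Nat.add_zero]
    have : ∀ k : ℕ, V n (n + (k + 1)) * Complex.exp (Complex.I * ((k + 1 : ℕ) : ℂ) * X)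
        = V n n * (Afun V n (k + 1) * Complex.exp (Complex.I * ((k : ℂ) + 1) * X)) := by
      intro k
      rw [hcoeff (k + 1)]
      push_cast
      ring
    rw [tsum_congr this, tsum_mul_left]
    ring
  -- final assembly
  rw [f1]
  rw [key, hT, hU]
  rw [show Complex.exp (-Complex.I * (n : ℂ) * X / 2) *
      (Complex.exp (Complex.I * (n : ℂ) * X) * (V n n * (1 + ∑' a : ℕ,
        Afun V n (a + 1) * Complex.exp (Complex.I * ((a : ℂ) + 1) * X))))
      = (Complex.exp (-Complex.I * (n : ℂ) * X / 2) * Complex.exp (Complex.I * (n : ℂ) * X)) *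
        (V n n * (1 + ∑' a : ℕ,
          Afun V n (a + 1) * Complex.exp (Complex.I * ((a : ℂ) + 1) * X))) by ring]
  rw [← Complex.exp_add]
  rw [show -Complex.I * (n : ℂ) * X / 2 + Complex.I * (n : ℂ) * X
      = Complex.I * ((n : ℂ) / 2) * X by ring]
  ring
end

section
/- For all integers n ≥ 1 and α ≥ 1, V_{n,α+n} = V_{nn}·Σ_{m=1}^{α} V_{mα}/(m+n). -/
open Complex MeasureTheory Filter Topology

theorem stmt10 (q : ℕ → ℂ) (V : ℕ → ℕ → ℂ)
    (hq : Summable fun n : ℕ => ‖q (n + 1)‖ ^ 2)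
    (hR : Recur q V) (hC : Conv V)
    (n α : ℕ) (hn : 1 ≤ n) (hα : 1 ≤ α) :
    V n (α + n) = V n n * ∑ m ∈ Finset.Icc 1 α, V m α / ((m : ℂ) + (n : ℂ)) := by
  obtain ⟨h6, h7⟩ := hR
  clear hq hC
  revert hα
  induction α using Nat.strong_induction_on with
  | _ α IH =>
  intro hα
  obtain ⟨b, rfl⟩ : ∃ b, α = b + 1 := ⟨α - 1, by omega⟩
  have hmn : ∀ m : ℕ, 1 ≤ m → ((m : ℂ) + (n : ℂ)) ≠ 0 := by
    intro m hm
    have h1 : ((m : ℂ) + (n : ℂ)) = ((m + n : ℕ) : ℂ) := by push_cast; ring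
    rw [h1]
    exact Nat.cast_ne_zero.mpr (by omega)
  have hA : ((b + 1 : ℕ) : ℂ) ≠ 0 := Nat.cast_ne_zero.mpr (by omega)
  have hAn : (((b + 1 : ℕ) : ℂ) + (n : ℂ)) ≠ 0 := hmn (b + 1) (by omega)
  -- consequence of (6) at (m, b+1)
  have hterm : ∀ m ∈ Finset.Icc 1 (b + 1),
      ((b + 1 : ℕ) : ℂ) * (((b + 1 : ℕ) : ℂ) - (m : ℂ)) * V m (b + 1)
        = -∑ s ∈ Finset.Icc m b, q (b + 1 - s) * V m s := by
    intro m hm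
    rw [Finset.mem_Icc] at hm
    rcases eq_or_lt_of_le hm.2 with h | h
    · rw [h, Finset.Icc_eq_empty (by omega)]
      simp
    · have h0 := h6 m (b + 1) hm.1 h
      have hb : b + 1 - 1 = b := by omega
      rw [hb] at h0
      linear_combination h0
  -- key swap identity
  have hkey : ((b + 1 : ℕ) : ℂ) * ∑ m ∈ Finset.Icc 1 (b + 1),
        (((b + 1 : ℕ) : ℂ) - (m : ℂ)) * V m (b + 1) / ((m : ℂ) + (n : ℂ))
      = -∑ s ∈ Finset.Icc 1 b, q (b + 1 - s) *
          ∑ m ∈ Finset.Icc 1 s, V m s / ((m : ℂ) + (n : ℂ)) := by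
    rw [Finset.mul_sum]
    have step1 : ∀ m ∈ Finset.Icc 1 (b + 1),
        ((b + 1 : ℕ) : ℂ) * ((((b + 1 : ℕ) : ℂ) - (m : ℂ)) * V m (b + 1) / ((m : ℂ) + (n : ℂ)))
          = -∑ s ∈ Finset.Icc m b, q (b + 1 - s) * V m s / ((m : ℂ) + (n : ℂ)) := by
      intro m hm
      rw [← Finset.sum_div]
      linear_combination (hterm m hm) / ((m : ℂ) + (n : ℂ))
    rw [Finset.sum_congr rfl step1, Finset.sum_neg_distrib]
    congr 1
    rw [Finset.sum_comm' (t' := Finset.Icc 1 b) (s' := fun s => Finset.Icc 1 s)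
      (by intro x y; simp only [Finset.mem_Icc]; omega)]
    refine Finset.sum_congr rfl fun s hs => ?_
    rw [Finset.mul_sum]
    refine Finset.sum_congr rfl fun m hm => ?_
    ring
  -- (7)
  have hq7 : q (b + 1) = -((b + 1 : ℕ) : ℂ) * ∑ m ∈ Finset.Icc 1 (b + 1), V m (b + 1) := by
    linear_combination h7 (b + 1) (by omega)
  -- recurrence at (n, b+1+n), reindexed
  have hrec := h6 n (b + 1 + n) hn (by omega)
  have hre : ∑ s ∈ Finset.Icc n (b + 1 + n - 1), q (b + 1 + n - s) * V n s
      = V n n * q (b + 1)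
        + V n n * ∑ s ∈ Finset.Icc 1 b, q (b + 1 - s) *
            ∑ m ∈ Finset.Icc 1 s, V m s / ((m : ℂ) + (n : ℂ)) := by
    have h1 : Finset.Icc n (b + 1 + n - 1) = Finset.Ico n (b + 1 + n) := by
      rw [← Finset.Ico_add_one_right_eq_Icc]
      congr 1
      omega
    rw [h1, Finset.sum_Ico_eq_sum_range]
    have h2 : b + 1 + n - n = b + 1 := by omega
    rw [h2, Finset.sum_range_succ']
    have h3 : ∀ j ∈ Finset.range b, q (b + 1 + n - (n + (j + 1))) * V n (n + (j + 1))
        = q (b + 1 - (j + 1)) * (V n n * ∑ m ∈ Finset.Icc 1 (j + 1),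
            V m (j + 1) / ((m : ℂ) + (n : ℂ))) := by
      intro j hj
      rw [Finset.mem_range] at hj
      have e1 : b + 1 + n - (n + (j + 1)) = b + 1 - (j + 1) := by omega
      have e2 : n + (j + 1) = (j + 1) + n := by omega
      rw [e1, e2, IH (j + 1) (by omega) (by omega)]
    rw [Finset.sum_congr rfl h3]
    have h4 : q (b + 1 + n - (n + 0)) * V n (n + 0) = V n n * q (b + 1) := by
      have e : b + 1 + n - (n + 0) = b + 1 := by omega
      rw [e]
      simp [mul_comm]
    rw [h4]
    have h5 : ∑ s ∈ Finset.Icc 1 b, q (b + 1 - s) *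
          ∑ m ∈ Finset.Icc 1 s, V m s / ((m : ℂ) + (n : ℂ))
        = ∑ j ∈ Finset.range b, q (b + 1 - (j + 1)) *
            ∑ m ∈ Finset.Icc 1 (j + 1), V m (j + 1) / ((m : ℂ) + (n : ℂ)) := by
      have h1' : Finset.Icc 1 b = Finset.Ico 1 (b + 1) := by
        rw [← Finset.Ico_add_one_right_eq_Icc]
      rw [h1', Finset.sum_Ico_eq_sum_range]
      have h2' : b + 1 - 1 = b := by omega
      rw [h2']
      refine Finset.sum_congr rfl fun j hj => ?_
      have e : 1 + j = j + 1 := by omega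
      rw [e]
    have h6' : ∑ j ∈ Finset.range b, q (b + 1 - (j + 1)) *
          (V n n * ∑ m ∈ Finset.Icc 1 (j + 1), V m (j + 1) / ((m : ℂ) + (n : ℂ)))
        = V n n * ∑ s ∈ Finset.Icc 1 b, q (b + 1 - s) *
            ∑ m ∈ Finset.Icc 1 s, V m s / ((m : ℂ) + (n : ℂ)) := by
      rw [h5, Finset.mul_sum]
      refine Finset.sum_congr rfl fun j hj => ?_
      ring
    rw [h6']
    ring
  rw [hre] at hrec
  -- combine termwise
  have hcomb : (((b + 1 : ℕ) : ℂ) + (n : ℂ)) *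
        ∑ m ∈ Finset.Icc 1 (b + 1), V m (b + 1) / ((m : ℂ) + (n : ℂ))
      = (∑ m ∈ Finset.Icc 1 (b + 1), V m (b + 1))
        + ∑ m ∈ Finset.Icc 1 (b + 1),
            (((b + 1 : ℕ) : ℂ) - (m : ℂ)) * V m (b + 1) / ((m : ℂ) + (n : ℂ)) := by
    rw [Finset.mul_sum, ← Finset.sum_add_distrib]
    refine Finset.sum_congr rfl fun m hm => ?_
    have h0 := hmn m (Finset.mem_Icc.mp hm).1
    field_simp
    ring
  apply mul_left_cancel₀ (mul_ne_zero hAn hA)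
  push_cast at hrec hkey hq7 hcomb ⊢
  linear_combination hrec - V n n * hq7 - V n n * hkey
    - V n n * ((b : ℂ) + 1) * hcomb
end
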